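/- arXiv:2512.12942 — 12 statements merged into one kernel-verified Lean document; each statement's English description precedes it below -/
import Mathlib

section
/- Let G be an abelian group and let S and R be nonempty finite subsets of G. Then SR = S (where SR = {sr : s ∈ S, r ∈ R}) if and only if S is a union of cosets of the subgroup ⟨R⟩ generated by R. -/
/-!
For a finite set `S`, the inclusion `g • S ⊆ S` is already an equality by counting, so the
elements translating `S` into itself form a subgroup, the stabilizer of `S`. Hence `S * R ⊆ S`
holds iff `R`, equivalently `⟨R⟩`, lies in that stabilizer; and for nonempty `R` counting again
upgrades `S * R ⊆ S` to `S * R = S`.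
-/

open Pointwise

namespace Finset

variable {G : Type*} [DecidableEq G]

theorem mul_eq_left_iff_mul_subset [Mul G] [IsRightCancelMul G] {S R : Finset G}
    (hR : R.Nonempty) : S * R = S ↔ S * R ⊆ S :=
  ⟨Eq.subset, fun h => eq_of_subset_of_card_le h (card_le_card_mul_right hR)⟩

theorem mem_stabilizer_iff_smul_finset_subset {α β : Type*} [Group α] [MulAction α β]
    [DecidableEq β] {a : α} {s : Finset β} :
    a ∈ MulAction.stabilizer α s ↔ a • s ⊆ s :=
  ⟨fun h => (MulAction.mem_stabilizer_iff.1 h).subset,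
    fun h => MulAction.mem_stabilizer_iff.2 (eq_of_subset_of_card_le h (card_smul_finset a s).ge)⟩

theorem mem_stabilizer_iff_forall_mul_mem [CommGroup G] {g : G} {S : Finset G} :
    g ∈ MulAction.stabilizer G S ↔ ∀ s ∈ S, s * g ∈ S := by
  simp only [mem_stabilizer_iff_smul_finset_subset, smul_finset_def, image_subset_iff, smul_eq_mul,
    mul_comm g]

theorem mul_subset_left_iff_subset_stabilizer [CommGroup G] {S R : Finset G} :
    S * R ⊆ S ↔ (R : Set G) ⊆ MulAction.stabilizer G S := by
  simp only [mul_subset_iff, Set.subset_def, SetLike.mem_coe,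
    mem_stabilizer_iff_forall_mul_mem]
  exact forall₂_comm

end Finset

theorem stmt_0_general {G : Type*} [CommGroup G] [DecidableEq G]
    (S R : Finset G) (hR : R.Nonempty) :
    S * R = S ↔ ∀ s ∈ S, ∀ g ∈ Subgroup.closure (R : Set G), s * g ∈ S := by
  rw [Finset.mul_eq_left_iff_mul_subset hR, Finset.mul_subset_left_iff_subset_stabilizer,
    ← Subgroup.closure_le, SetLike.le_def]
  simp only [Finset.mem_stabilizer_iff_forall_mul_mem]
  exact forall₂_comm

theorem stmt_0 {G : Type*} [CommGroup G] [DecidableEq G]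
    (S R : Finset G) (hS : S.Nonempty) (hR : R.Nonempty) :
    S * R = S ↔ ∀ s ∈ S, ∀ g ∈ Subgroup.closure (R : Set G), s * g ∈ S :=
  stmt_0_general S R hR
end

section
/- Let A and B be nonempty finite subsets of an abelian group G with |A| = |B|. Then the pair (A,B) is unmatchable (i.e., there is no bijection f : A → B with a·f(a) ∉ A for all a ∈ A) if and only if there exists a nonempty subset R ⊆ B and disjoint decompositions A = S ∪ Y and B = R ∪ Z, where S is a union of cosets of ⟨R⟩ and |Y| < |R|. -/
/-!
By Hall's theorem, `(A, B)` is unmatchable iff some `R ⊆ B` (a violator) has fewer than `|R|`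
elements of `A` available to it, where `a` is available to `R` when `a r ∉ A` for some `r ∈ R`.
For a minimal violator `R`, the set `S` of unavailable elements (those with `a R ⊆ A`) satisfies
`S R ⊆ S`: if `c r ∉ S` for some `c ∈ S`, `r ∈ R`, then the elements `r ∈ R` with `c r ∈ S` form
a smaller violator. Being finite, `S` is then stable under `⟨R⟩`. Conversely, in a matching every
`r ∈ R` is matched to an element of `A` available to `R`, and these all lie in `Y`.
-/

open Pointwise Finset

section

variable {G : Type*} [CommGroup G]

def Matchable (A B : Finset G) : Prop :=
  ∃ f : G → G, Set.BijOn f (A : Set G) (B : Set G) ∧ ∀ a ∈ A, a * f a ∉ A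

variable [DecidableEq G]

/-- `A \ stableCore A R` is the Hall neighbourhood of `R`: the elements `a ∈ A` that may be matched
to some `r ∈ R`, i.e. with `a r ∉ A`. -/
def stableCore (A R : Finset G) : Finset G := {a ∈ A | ∀ r ∈ R, a * r ∈ A}

theorem mem_stableCore {A R : Finset G} {a : G} :
    a ∈ stableCore A R ↔ a ∈ A ∧ ∀ r ∈ R, a * r ∈ A :=
  mem_filter

theorem stableCore_subset (A R : Finset G) : stableCore A R ⊆ A :=
  filter_subset _ _

theorem Matchable.card_le_card_sdiff_stableCore {A B R : Finset G} (h : Matchable A B)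
    (hRB : R ⊆ B) : #R ≤ #(A \ stableCore A R) := by
  obtain ⟨f, hf, hmatch⟩ := h
  have hsurj : R ⊆ {a ∈ A | f a ∈ R}.image f := by
    intro r hr
    obtain ⟨a, ha, rfl⟩ := hf.surjOn (hRB hr)
    exact mem_image_of_mem f (mem_filter.2 ⟨ha, hr⟩)
  have hsub : {a ∈ A | f a ∈ R} ⊆ A \ stableCore A R := fun a ha => by
    rw [mem_filter] at ha
    exact mem_sdiff.2 ⟨ha.1, fun hc => hmatch a ha.1 ((mem_stableCore.1 hc).2 _ ha.2)⟩
  calc #R ≤ #({a ∈ A | f a ∈ R}.image f) := card_le_card hsurj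
    _ ≤ #{a ∈ A | f a ∈ R} := card_image_le
    _ ≤ #(A \ stableCore A R) := card_le_card hsub

theorem matchable_of_forall_card_le {A B : Finset G} (hcard : #A = #B)
    (hHall : ∀ R ⊆ B, #R ≤ #(A \ stableCore A R)) : Matchable A B := by
  let t : B → Finset G := fun b => {a ∈ A | a * b ∉ A}
  have hbiUnion (s : Finset B) :
      s.biUnion t = A \ stableCore A (s.map (Function.Embedding.subtype _)) := by
    ext a
    simp [t, mem_stableCore]
    tauto
  obtain ⟨g, hg, hgt⟩ := (all_card_le_biUnion_card_iff_existsInjective' t).1 fun s => by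
    rw [hbiUnion, ← card_map (Function.Embedding.subtype _)]
    refine hHall _ fun x hx => ?_
    obtain ⟨b, -, rfl⟩ := mem_map.1 hx
    exact b.2
  let g' : G → G := fun b => if hb : b ∈ B then g ⟨b, hb⟩ else b
  have hg'B {b : G} (hb : b ∈ B) : g' b = g ⟨b, hb⟩ := dif_pos hb
  have hmaps : Set.MapsTo g' B A := fun b hb => by
    rw [hg'B hb]
    exact (mem_filter.1 (hgt ⟨b, hb⟩)).1
  have hinj : Set.InjOn g' B := fun b hb b' hb' h => by
    rw [hg'B hb, hg'B hb'] at h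
    exact congrArg Subtype.val (hg h)
  have hbij : Set.BijOn g' B A := ⟨hmaps, hinj, surjOn_of_injOn_of_card_le g' hmaps hinj hcard.le⟩
  have hinv := hbij.invOn_invFunOn
  have hbij' := hbij.symm hinv.symm
  refine ⟨Function.invFunOn g' B, hbij', fun a ha => ?_⟩
  have hb := hbij'.mapsTo ha
  have := (mem_filter.1 (hgt ⟨_, hb⟩)).2
  rwa [← hg'B hb, hinv.2 ha] at this

theorem exists_minimal_violator {A B : Finset G} (h : ∃ R ⊆ B, #(A \ stableCore A R) < #R) :
    ∃ R ⊆ B, #(A \ stableCore A R) < #R ∧ ∀ V ⊂ R, #V ≤ #(A \ stableCore A V) := by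
  obtain ⟨R₀, hR₀B, hR₀⟩ := h
  obtain ⟨R, hR, hmin⟩ := exists_min_image {R ∈ B.powerset | #(A \ stableCore A R) < #R} card
    ⟨R₀, mem_filter.2 ⟨mem_powerset.2 hR₀B, hR₀⟩⟩
  rw [mem_filter, mem_powerset] at hR
  refine ⟨R, hR.1, hR.2, fun V hVR => not_lt.1 fun hV => ?_⟩
  have := hmin V (mem_filter.2 ⟨mem_powerset.2 (hVR.subset.trans hR.1), hV⟩)
  exact (card_lt_card hVR).not_ge this

theorem stableCore_anti {A R V : Finset G} (hVR : V ⊆ R) : stableCore A R ⊆ stableCore A V :=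
  monotone_filter_right A fun _ _ h r hr => h r (hVR hr)

theorem mul_mem_stableCore_of_minimal {A R : Finset G} (hR : #(A \ stableCore A R) < #R)
    (hmin : ∀ V ⊂ R, #V ≤ #(A \ stableCore A V)) {c r : G} (hc : c ∈ stableCore A R)
    (hr : r ∈ R) : c * r ∈ stableCore A R := by
  by_contra hcr
  set V := {r ∈ R | c * r ∈ stableCore A R}
  have hVR : V ⊂ R := filter_ssubset.2 ⟨r, hr, hcr⟩
  have hsdiff : A \ stableCore A V ⊆ A \ stableCore A R :=
    sdiff_subset_sdiff subset_rfl (stableCore_anti hVR.subset)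
  have himage : (R \ V).image (c * ·) ⊆ (A \ stableCore A R) \ (A \ stableCore A V) := by
    intro x hx
    obtain ⟨w, hw, rfl⟩ := mem_image.1 hx
    obtain ⟨hwR, hwV⟩ := mem_sdiff.1 hw
    have hcw : c * w ∈ A := (mem_stableCore.1 hc).2 w hwR
    have hcwV : c * w ∈ stableCore A V := mem_stableCore.2 ⟨hcw, fun v hv => by
      rw [mul_right_comm]
      exact (mem_stableCore.1 (mem_filter.1 hv).2).2 w hwR⟩
    refine mem_sdiff.2 ⟨mem_sdiff.2 ⟨hcw, fun h => hwV (mem_filter.2 ⟨hwR, h⟩)⟩, ?_⟩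
    exact fun h => (mem_sdiff.1 h).2 hcwV
  have hcard := card_le_card himage
  rw [card_image_of_injective _ (mul_right_injective c), card_sdiff_of_subset hsdiff,
    card_sdiff_of_subset hVR.subset] at hcard
  have := hmin V hVR
  have := card_le_card hVR.subset
  have := card_le_card hsdiff
  omega

theorem Finset.mul_mem_of_mem_closure {C R : Finset G} (h : ∀ c ∈ C, ∀ r ∈ R, c * r ∈ C)
    {c g : G} (hc : c ∈ C) (hg : g ∈ Subgroup.closure (R : Set G)) : c * g ∈ C := by
  have hle : Subgroup.closure (R : Set G) ≤ MulAction.stabilizer G C := by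
    refine Subgroup.closure_le _ |>.2 fun r hr => MulAction.mem_stabilizer_iff.2 ?_
    refine eq_of_subset_of_card_le (fun x hx => ?_) (card_smul_finset r C).ge
    obtain ⟨c, hc, rfl⟩ := mem_smul_finset.1 hx
    simpa [mul_comm] using h c hc r hr
  have hgC : g • C = C := MulAction.mem_stabilizer_iff.1 (hle hg)
  simpa [mul_comm, hgC] using smul_mem_smul_finset (a := g) hc

end

theorem stmt_2_general {G : Type*} [CommGroup G] [DecidableEq G]
    (A B : Finset G)
    (hcard : A.card = B.card) :
    (¬ ∃ f : G → G, Set.BijOn f (A : Set G) (B : Set G) ∧ ∀ a ∈ A, a * f a ∉ A) ↔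
    ∃ S Y R Z : Finset G, R.Nonempty ∧ R ⊆ B ∧
      A = S ∪ Y ∧ Disjoint S Y ∧
      B = R ∪ Z ∧ Disjoint R Z ∧
      S.Nonempty ∧ (∀ s ∈ S, ∀ g ∈ Subgroup.closure (R : Set G), s * g ∈ S) ∧
      Y.card < R.card := by
  constructor
  · intro hunmatchable
    have hviolator : ∃ R ⊆ B, #(A \ stableCore A R) < #R := by
      by_contra! hHall
      exact hunmatchable (matchable_of_forall_card_le hcard hHall)
    obtain ⟨R, hRB, hR, hmin⟩ := exists_minimal_violator hviolator
    have hSA := stableCore_subset A R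
    have hSne : (stableCore A R).Nonempty := by
      have := card_sdiff_add_card_eq_card hSA
      have := card_le_card hRB
      rw [← card_pos]
      omega
    refine ⟨stableCore A R, A \ stableCore A R, R, B \ R, card_pos.1 (by omega), hRB,
      (union_sdiff_of_subset hSA).symm, disjoint_sdiff, (union_sdiff_of_subset hRB).symm,
      disjoint_sdiff, hSne, fun s hs g hg => ?_, hR⟩
    exact mul_mem_of_mem_closure
      (fun c hc r hr => mul_mem_stableCore_of_minimal hR hmin hc hr) hs hg
  · rintro ⟨S, Y, R, Z, -, hRB, rfl, -, -, -, -, hS, hYR⟩ hmatchable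
    have hY : (S ∪ Y) \ stableCore (S ∪ Y) R ⊆ Y := fun a ha => by
      obtain ⟨haSY, hacore⟩ := mem_sdiff.1 ha
      refine (mem_union.1 haSY).resolve_left fun haS => hacore (mem_stableCore.2 ⟨haSY, ?_⟩)
      exact fun r hr => mem_union_left Y (hS a haS r (Subgroup.subset_closure hr))
    have hHall := Matchable.card_le_card_sdiff_stableCore hmatchable hRB
    exact (hHall.trans (card_le_card hY)).not_gt hYR

theorem stmt_2 {G : Type*} [CommGroup G] [DecidableEq G]
    (A B : Finset G) (hA : A.Nonempty) (hB : B.Nonempty)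
    (hcard : A.card = B.card) :
    (¬ ∃ f : G → G, Set.BijOn f (A : Set G) (B : Set G) ∧ ∀ a ∈ A, a * f a ∉ A) ↔
    ∃ S Y R Z : Finset G, R.Nonempty ∧ R ⊆ B ∧
      A = S ∪ Y ∧ Disjoint S Y ∧
      B = R ∪ Z ∧ Disjoint R Z ∧
      S.Nonempty ∧ (∀ s ∈ S, ∀ g ∈ Subgroup.closure (R : Set G), s * g ∈ S) ∧
      Y.card < R.card :=
  stmt_2_general A B hcard
end

section
/- Let A and B be nonempty finite subsets of an abelian group G with |A| = |B| and 1 ∉ A. Suppose that for every nonempty subset R ⊆ B one has |⟨R⟩ ∩ A| ≥ |R|. Then there exists a bijection f : A → B with a·f(a) ∉ A for all a ∈ A. -/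
/-!
Hall's theorem reduces the claim to `#R ≤ #{a ∈ A | ∃ b ∈ R, a * b ∉ A}` for `R ⊆ B`, which is
proved by strong induction on `R`, after restricting `A` to `D = A ∩ ⟨R⟩`. Let `C ⊆ D` be the
elements `a` with `a * R ⊆ D`. Iterating Dyson e-transforms on `(C, R)` yields `C' ⊇ C` inside `D`
and `R' ⊆ R` with `C' * R' ⊆ C'` and `#C' + #R' = #C + #R`. Since `C'` then is a union of cosets
of `⟨R'⟩` and `1 ∉ D`, `R' ≠ R`, so the induction hypothesis for `R'` supplies `#R'` elements of
`D \ C'` leaving `D` under multiplication by `R'`, and counting inside `D` gives the claim.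
-/

open Finset MulAction Subgroup
open scoped Pointwise

namespace Finset

theorem exists_bijOn_forall_mem_of_hall {α β : Type*} [Nonempty α] [DecidableEq β]
    {A : Finset β} {B : Finset α} (t : α → Finset β) (htA : ∀ b ∈ B, t b ⊆ A) (hcard : #A = #B)
    (hall : ∀ R ⊆ B, #R ≤ #(R.biUnion t)) :
    ∃ f : β → α, Set.BijOn f A B ∧ ∀ a ∈ A, a ∈ t (f a) := by
  classical
  obtain ⟨g, hg, hgt⟩ := (all_card_le_biUnion_card_iff_existsInjective' fun b : B => t b).1
    fun s => by
      simpa [image_biUnion, card_image_of_injective _ Subtype.val_injective] using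
        hall (s.image Subtype.val) fun _ hx => by obtain ⟨b, -, rfl⟩ := mem_image.1 hx; exact b.2
  let e : B ≃ A := Equiv.ofBijective (fun b => ⟨g b, htA b b.2 (hgt b)⟩)
    ((Fintype.bijective_iff_injective_and_card _).2
      ⟨fun b b' h => hg (congrArg Subtype.val h), by simp [hcard]⟩)
  have hge (a : β) (ha : a ∈ A) : g (e.symm ⟨a, ha⟩) = a :=
    congrArg Subtype.val (e.apply_symm_apply ⟨a, ha⟩)
  refine ⟨fun a => if h : a ∈ A then e.symm ⟨a, h⟩ else Classical.arbitrary α,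
    ⟨fun a ha => ?_, fun a ha a' ha' h => ?_, fun b hb => ?_⟩, fun a ha => ?_⟩
  · simp [mem_coe.1 ha]
  · simpa [mem_coe.1 ha, mem_coe.1 ha', Subtype.val_inj, e.symm.injective.eq_iff] using h
  · exact ⟨e ⟨b, hb⟩, (e ⟨b, hb⟩).2, by simp⟩
  · simpa [ha, hge a ha] using hgt (e.symm ⟨a, ha⟩)

variable {G : Type*} [CommGroup G] [DecidableEq G]

theorem one_mem_of_mul_subset_self {X S : Finset G} (hX : X * S ⊆ X) {a : G} (ha : a ∈ X)
    (haS : a ∈ closure (S : Set G)) : (1 : G) ∈ X := by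
  have hle : closure (S : Set G) ≤ stabilizer G X :=
    (closure_le _).2 fun s hs => mem_stabilizer_finset'.2 fun x hx => by
      rw [smul_eq_mul, mul_comm]
      exact hX (mul_mem_mul hx hs)
  simpa using mem_stabilizer_finset'.1 (hle (inv_mem haS)) ha

theorem exists_superset_mul_subset_self (C T : Finset G) :
    ∃ C' T' : Finset G, C ⊆ C' ∧ T' ⊆ T ∧ C' * T' ⊆ C' ∧ C' ⊆ C ∪ C * T ∧
      #C' + #T' = #C + #T := by
  induction T using Finset.strongInduction generalizing C with
  | H T ih =>
  by_cases hCT : C * T ⊆ C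
  · exact ⟨C, T, subset_rfl, subset_rfl, hCT, subset_union_left, rfl⟩
  obtain ⟨c, hc, t, ht, hct⟩ : ∃ c ∈ C, ∃ t ∈ T, c * t ∉ C := by
    simpa [mul_subset_iff] using hCT
  set x := mulDysonETransform c (C, T)
  have hlt : x.2 ⊂ T := ssubset_of_subset_of_ne inter_subset_left fun h =>
    hct (mem_inv_smul_finset_iff.1 (mem_inter.1 (h ▸ ht : t ∈ x.2)).2)
  obtain ⟨C', T', hC', hT', hclosed, hsub, hcard⟩ := ih x.2 hlt x.1
  refine ⟨C', T', subset_union_left.trans hC', hT'.trans hlt.subset, hclosed, hsub.trans ?_,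
    hcard.trans (mulDysonETransform.card c (C, T))⟩
  exact union_subset (union_subset subset_union_left
    ((smul_finset_subset_mul hc).trans subset_union_right))
    ((mulDysonETransform.subset c (C, T)).trans subset_union_right)

open scoped Classical in
theorem card_le_card_filter_exists_mul_notMem {D S : Finset G} (hD : (1 : G) ∉ D)
    (hS : ∀ S' ⊆ S, #S' ≤ #{a ∈ D | a ∈ closure (S' : Set G)}) :
    #S ≤ #{a ∈ D | ∃ b ∈ S, a * b ∉ D} := by
  induction S using Finset.strongInduction generalizing D with
  | H S ih =>
  set D₀ := {a ∈ D | a ∈ closure (S : Set G)}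
  set N₀ := {a ∈ D₀ | ∃ b ∈ S, a * b ∉ D₀}
  have hN₀ : N₀ ⊆ {a ∈ D | ∃ b ∈ S, a * b ∉ D} := by
    intro a ha
    simp only [N₀, D₀, mem_filter] at ha ⊢
    obtain ⟨⟨haD, haS⟩, b, hb, hab⟩ := ha
    exact ⟨haD, b, hb, fun habD => hab ⟨habD, mul_mem haS (subset_closure hb)⟩⟩
  refine le_trans ?_ (card_le_card hN₀)
  set C := D₀ \ N₀
  have hD₀ : #C + #N₀ = #D₀ := card_sdiff_add_card_eq_card (filter_subset _ _)
  rcases C.eq_empty_or_nonempty with hC | ⟨c, hc⟩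
  · have : #S ≤ #D₀ := hS S subset_rfl
    rw [hC, card_empty] at hD₀
    omega
  have hCS : C * S ⊆ D₀ := mul_subset_iff.2 fun a ha b hb => by
    by_contra hab
    exact (mem_sdiff.1 ha).2 (mem_filter.2 ⟨(mem_sdiff.1 ha).1, b, hb, hab⟩)
  obtain ⟨Cs, Ss, hCCs, hSsS, hclosed, hCsC, hcard⟩ := exists_superset_mul_subset_self C S
  have hCsD₀ : Cs ⊆ D₀ := hCsC.trans (union_subset sdiff_subset hCS)
  obtain rfl | hSs := hSsS.eq_or_ssubset
  · exfalso
    refine hD (mem_filter.1 (hCsD₀ ?_)).1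
    exact one_mem_of_mul_subset_self hclosed (hCCs hc) (mem_filter.1 (hCsD₀ (hCCs hc))).2
  set N' := {a ∈ D₀ | ∃ b ∈ Ss, a * b ∉ D₀}
  have hSsN' : #Ss ≤ #N' := ih Ss hSs (fun h1 => hD (mem_filter.1 h1).1) fun S' hS' => by
    rw [filter_filter]
    refine (hS S' (hS'.trans hSsS)).trans_eq (congrArg card (filter_congr fun a _ => ?_))
    exact (and_iff_right_of_imp fun ha => closure_mono (coe_subset.2 (hS'.trans hSsS)) ha).symm
  have hN'N₀ : #N' ≤ #N₀ := card_le_card fun a ha => by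
    obtain ⟨haD₀, b, hb, hab⟩ := mem_filter.1 ha
    exact mem_filter.2 ⟨haD₀, b, hSsS hb, hab⟩
  have hdisj : Disjoint Cs N' := disjoint_left.2 fun a haCs haN' => by
    obtain ⟨-, b, hb, hab⟩ := mem_filter.1 haN'
    exact hab (hCsD₀ (hclosed (mul_mem_mul haCs hb)))
  have hCsN' : #Cs + #N' ≤ #D₀ := by
    rw [← card_union_of_disjoint hdisj]
    exact card_le_card (union_subset hCsD₀ (filter_subset _ _))
  omega

end Finset

theorem stmt_3_general {G : Type*} [CommGroup G] [DecidableEq G]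
    (A B : Finset G)
    (hcard : A.card = B.card) (h1 : (1 : G) ∉ A)
    (h : ∀ R : Finset G, R.Nonempty → R ⊆ B →
      R.card ≤ ((Subgroup.closure (R : Set G) : Set G) ∩ (A : Set G)).ncard) :
    ∃ f : G → G, Set.BijOn f (A : Set G) (B : Set G) ∧ ∀ a ∈ A, a * f a ∉ A := by
  classical
  have hall : ∀ R ⊆ B, #R ≤ #(R.biUnion fun b => {a ∈ A | a * b ∉ A}) := by
    intro R hR
    refine (card_le_card_filter_exists_mul_notMem h1 fun S hS => ?_).trans
      (card_le_card fun a ha => ?_)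
    · obtain rfl | hSne := S.eq_empty_or_nonempty
      · simp
      have hncard : ((closure (S : Set G) : Set G) ∩ A).ncard =
          #{a ∈ A | a ∈ closure (S : Set G)} := by
        rw [← Set.ncard_coe_finset, coe_filter, Set.inter_comm]
        rfl
      exact hncard ▸ h S hSne (hS.trans hR)
    · simp only [mem_filter, mem_biUnion] at ha ⊢
      obtain ⟨haA, b, hb, hab⟩ := ha
      exact ⟨b, hb, haA, hab⟩
  obtain ⟨f, hf, hfA⟩ := exists_bijOn_forall_mem_of_hall _ (fun _ _ => filter_subset _ A) hcard hall
  exact ⟨f, hf, fun a ha => (mem_filter.1 (hfA a ha)).2⟩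

theorem stmt_3 {G : Type*} [CommGroup G] [DecidableEq G]
    (A B : Finset G) (hA : A.Nonempty) (hB : B.Nonempty)
    (hcard : A.card = B.card) (h1 : (1 : G) ∉ A)
    (h : ∀ R : Finset G, R.Nonempty → R ⊆ B →
      R.card ≤ ((Subgroup.closure (R : Set G) : Set G) ∩ (A : Set G)).ncard) :
    ∃ f : G → G, Set.BijOn f (A : Set G) (B : Set G) ∧ ∀ a ∈ A, a * f a ∉ A :=
  stmt_3_general A B hcard h1 h
end

section
/- Let A be a nonempty finite subset of an abelian group G with 1 ∉ A. Then there exists a bijection f : A → A such that a·f(a) ∉ A for all a ∈ A. -/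
/-!
By Hall's theorem it suffices that every `S ⊆ A` has at least `|S|` partners `b ∈ A` with
`a * b ∉ A` for some `a ∈ S`. The elements of `A` without a partner form a set `T` with
`S * T ⊆ A`, so it is enough to show that `S, T ⊆ A` and `S * T ⊆ A` force
`|S| + |T| ≤ |A|` whenever `1 ∉ A`. Dyson e-transforms `(T, S) ↦ (T ∪ t • S, S ∩ t⁻¹ • T)`
shrink `S` while preserving all hypotheses and `|S| + |T|`, until `t • S ⊆ T` for every
`t ∈ T`. Then any `g ∈ S ∩ T` (which exists as `|S| + |T| > |A|`) satisfies `g • T = T`,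
so `1 ∈ T ⊆ A`.
-/

open Finset Pointwise

namespace Finset

variable {G : Type*}

theorem one_mem_of_mem_of_smul_finset_subset [Group G] [DecidableEq G] {T : Finset G} {g : G}
    (hg : g ∈ T) (hgT : g • T ⊆ T) : (1 : G) ∈ T := by
  have hfix : g • T = T := eq_of_subset_of_card_le hgT (card_smul_finset g T).ge
  rw [← hfix, ← inv_smul_mem_iff, smul_eq_mul, inv_mul_cancel] at hg
  exact hg

theorem one_mem_of_mul_subset_of_card_lt [CommGroup G] [DecidableEq G] {A S T : Finset G}
    (hSA : S ⊆ A) (hTA : T ⊆ A) (hST : S * T ⊆ A) (hcard : #A < #S + #T) : (1 : G) ∈ A := by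
  induction S using Finset.strongInduction generalizing T with
  | H S ih =>
  by_cases hclosed : ∀ t ∈ T, t • S ⊆ T
  · obtain ⟨g, hg⟩ : (S ∩ T).Nonempty := by
      rw [← card_pos]
      have := card_union_add_card_inter S T
      have := card_le_card (union_subset hSA hTA)
      omega
    obtain ⟨hgS, hgT⟩ := mem_inter.mp hg
    refine hTA (one_mem_of_mem_of_smul_finset_subset hgT ?_)
    intro x hx
    obtain ⟨t, htT, rfl⟩ := mem_smul_finset.mp hx
    rw [smul_eq_mul, mul_comm]
    exact hclosed t htT (smul_mem_smul_finset hgS)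
  · push Not at hclosed
    obtain ⟨t, htT, hnot⟩ := hclosed
    have htSA : t • S ⊆ A := (smul_finset_subset_mul htT).trans (mul_comm T S ▸ hST)
    have hshrink : S ∩ t⁻¹ • T ⊂ S := by
      refine inter_subset_left.ssubset_of_ne fun h => hnot ?_
      rw [← h, smul_finset_inter, smul_inv_smul]
      exact inter_subset_right
    have hprod := mulDysonETransform.subset t (T, S)
    have hsum := mulDysonETransform.card t (T, S)
    simp only [mulDysonETransform] at hprod hsum
    exact ih _ hshrink (hshrink.subset.trans hSA) (union_subset hTA htSA)
      (by rw [mul_comm]; exact hprod.trans (mul_comm T S ▸ hST)) (by omega)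

theorem card_le_card_biUnion_filter_mul_notMem [CommGroup G] [DecidableEq G]
    {A S : Finset G} (h1 : (1 : G) ∉ A) (hSA : S ⊆ A) :
    #S ≤ #(S.biUnion fun a => {b ∈ A | a * b ∉ A}) := by
  set N := S.biUnion fun a => {b ∈ A | a * b ∉ A}
  have hNA : N ⊆ A := biUnion_subset.mpr fun _ _ => filter_subset _ _
  have hST : S * (A \ N) ⊆ A := by
    intro x hx
    obtain ⟨a, ha, b, hb, rfl⟩ := mem_mul.mp hx
    obtain ⟨hbA, hbN⟩ := mem_sdiff.mp hb
    by_contra hab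
    exact hbN (mem_biUnion.mpr ⟨a, ha, mem_filter.mpr ⟨hbA, hab⟩⟩)
  have hcard : #S + #(A \ N) ≤ #A :=
    not_lt.mp fun h => h1 (one_mem_of_mul_subset_of_card_lt hSA sdiff_subset hST h)
  have hcardN := card_sdiff_of_subset hNA
  have hNleA := card_le_card hNA
  omega

end Finset

theorem Set.Finite.exists_bijOn_of_injective {α : Type*} {s : Set α} (hs : s.Finite)
    (f : s → α) (hf : Function.Injective f) (hfs : ∀ a, f a ∈ s) :
    ∃ g : α → α, Set.BijOn g s s ∧ ∀ a : s, g a = f a := by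
  classical
  set g : α → α := fun x => if h : x ∈ s then f ⟨x, h⟩ else x
  have hg : ∀ a : s, g a = f a := fun a => dif_pos a.2
  refine ⟨g, (hs.injOn_iff_bijOn_of_mapsTo fun a ha => ?_).mp fun a ha b hb hab => ?_, hg⟩
  · exact hg ⟨a, ha⟩ ▸ hfs _
  · rw [hg ⟨a, ha⟩, hg ⟨b, hb⟩] at hab
    exact congrArg Subtype.val (hf hab)

theorem stmt_4_general {G : Type*} [CommGroup G]
    (A : Finset G) (h1 : (1 : G) ∉ A) :
    ∃ f : G → G, Set.BijOn f (A : Set G) (A : Set G) ∧ ∀ a ∈ A, a * f a ∉ A := by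
  classical
  have hall (s : Finset A) : #s ≤ #(s.biUnion fun a => {b ∈ A | (a : G) * b ∉ A}) := by
    have := card_le_card_biUnion_filter_mul_notMem h1 (s.image_subset_iff.mpr fun a _ => a.2)
    rwa [image_biUnion, card_image_of_injective s Subtype.val_injective] at this
  obtain ⟨f, hf, hfA⟩ := (all_card_le_biUnion_card_iff_exists_injective _).mp hall
  obtain ⟨g, hg, hgf⟩ :=
    A.finite_toSet.exists_bijOn_of_injective f hf fun a => (mem_filter.mp (hfA a)).1
  exact ⟨g, hg, fun a ha => hgf ⟨a, ha⟩ ▸ (mem_filter.mp (hfA ⟨a, ha⟩)).2⟩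

theorem stmt_4 {G : Type*} [CommGroup G]
    (A : Finset G) (hA : A.Nonempty) (h1 : (1 : G) ∉ A) :
    ∃ f : G → G, Set.BijOn f (A : Set G) (A : Set G) ∧ ∀ a ∈ A, a * f a ∉ A :=
  stmt_4_general A h1
end

section
/- Let A and B be nonempty finite subsets of an abelian group G with |A| = |B|. Suppose B is a Chowla set, i.e., every element x ∈ B has order greater than |B| (possibly infinite). Then there exists a bijection f : A → B with a·f(a) ∉ A for all a ∈ A. -/
/-!
Match `a ∈ A` to `b ∈ B` whenever `a * b ∉ A` and apply Hall's theorem. If Hall's condition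
failed for some `S ⊆ A`, the elements of `B` outside the neighbourhood of `S` together with `1`
would form a set `T` with `S * T ⊆ A` and `|S| + |T| > |A| + 1`. This contradicts the
Cauchy–Davenport type bound `|S * T| ≥ |S| + |T| - 1`, valid when every nontrivial element of `T`
has order exceeding `|S * T|`; the bound is proved by induction on `|T|` through Dyson
e-transforms, the induction ending when `S * T = S`, which forces the elements of `T` to have
order at most `|S|`.
-/

open Finset
open scoped Pointwise

namespace Finset

variable {G : Type*}

lemma orderOf_pos_and_le_card_of_mul_mem [Group G] {s : Finset G} {x : G} (hs : s.Nonempty)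
    (hx : ∀ a ∈ s, x * a ∈ s) : 0 < orderOf x ∧ orderOf x ≤ #s := by
  obtain ⟨e, he⟩ := hs
  have hpow : ∀ n : ℕ, x ^ n * e ∈ s := by
    intro n
    induction n with
    | zero => simpa using he
    | succ n ih => simpa [pow_succ', mul_assoc] using hx _ ih
  have hfin : IsOfFinOrder x := by
    by_contra hinf
    have hinj : Function.Injective fun n : ℕ ↦ x ^ n * e :=
      fun m n hmn ↦ injective_pow_iff_not_isOfFinOrder.2 hinf (mul_right_cancel hmn)
    exact Set.infinite_of_injective_forall_mem hinj hpow s.finite_toSet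
  refine ⟨hfin.orderOf_pos, le_card_of_inj_on_range _ (fun n _ ↦ hpow n) ?_⟩
  exact fun m hm n hn hmn ↦ pow_injOn_Iio_orderOf hm hn (mul_right_cancel hmn)

lemma card_add_card_le_card_mul_add_one [CommGroup G] [DecidableEq G] {s t : Finset G}
    (hs : s.Nonempty) (ht : (1 : G) ∈ t)
    (hord : ∀ x ∈ t, x ≠ 1 → orderOf x = 0 ∨ #(s * t) < orderOf x) :
    #s + #t ≤ #(s * t) + 1 := by
  induction hcard : #t using Nat.strong_induction_on generalizing s t with
  | _ n ih =>
  subst hcard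
  by_cases hstuck : ∀ e ∈ s, e • t ⊆ s
  · have hst : #s ≤ #(s * t) := card_le_card (subset_mul_left s ht)
    by_cases htriv : ∀ x ∈ t, x = 1
    · have : #t ≤ 1 := card_le_one.2 fun x hx y hy ↦ (htriv x hx).trans (htriv y hy).symm
      omega
    push Not at htriv
    obtain ⟨x, hxt, hx1⟩ := htriv
    have hclosed : ∀ a ∈ s, x * a ∈ s := fun a ha ↦
      mul_comm a x ▸ hstuck a ha (smul_mem_smul_finset hxt)
    have := orderOf_pos_and_le_card_of_mul_mem hs hclosed
    have := hord x hxt hx1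
    omega
  push Not at hstuck
  obtain ⟨e, hes, hnot⟩ := hstuck
  set st' := mulDysonETransform e (s, t)
  have hsub : st'.1 * st'.2 ⊆ s * t := mulDysonETransform.subset e (s, t)
  have hlt : #st'.2 < #t := by
    refine card_lt_card (ssubset_iff_subset_ne.2 ⟨inter_subset_left, fun h ↦ hnot ?_⟩)
    rw [smul_finset_subset_iff, ← h]
    exact inter_subset_right
  have := ih _ hlt (s := st'.1) (t := st'.2) ?_ ?_ ?_ rfl
  · have : #st'.1 + #st'.2 = #s + #t := mulDysonETransform.card e (s, t)
    have := card_le_card hsub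
    omega
  · exact hs.mono subset_union_left
  · exact mem_inter.2 ⟨ht, by simpa [mem_inv_smul_finset_iff] using hes⟩
  · exact fun x hx hx1 ↦ (hord x (mem_of_mem_inter_left hx) hx1).imp_right
      (lt_of_le_of_lt (card_le_card hsub))

lemma card_le_card_filter_exists_mul_notMem_s5 [CommGroup G] [DecidableEq G] {A B S : Finset G}
    (hAB : #A ≤ #B) (hB : ∀ x ∈ B, orderOf x = 0 ∨ #B < orderOf x) (hSA : S ⊆ A) :
    #S ≤ #{b ∈ B | ∃ a ∈ S, a * b ∉ A} := by
  obtain rfl | hS := S.eq_empty_or_nonempty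
  · simp
  by_contra! hlt
  set T₀ := {b ∈ B | ¬∃ a ∈ S, a * b ∉ A}
  have hsplit := card_filter_add_card_filter_not (s := B) (fun b ↦ ∃ a ∈ S, a * b ∉ A)
  have h1B : (1 : G) ∉ B := fun h ↦ by
    have := (hS.mono hSA).card_pos
    have := hB 1 h
    rw [orderOf_one] at this
    omega
  have hST : S * insert 1 T₀ ⊆ A := by
    refine mul_subset_iff.2 fun a ha b hb ↦ ?_
    obtain rfl | hb := mem_insert.1 hb
    · simpa using hSA ha
    · by_contra h
      exact (mem_filter.1 hb).2 ⟨a, ha, h⟩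
  have hkey := card_add_card_le_card_mul_add_one hS (mem_insert_self 1 T₀) fun x hx hx1 ↦
    (hB x (mem_filter.1 ((mem_insert.1 hx).resolve_left hx1)).1).imp_right
      ((card_le_card hST).trans hAB).trans_lt
  rw [card_insert_of_notMem fun h ↦ h1B (mem_filter.1 h).1] at hkey
  have := card_le_card hST
  omega

lemma exists_injOn_forall_mul_notMem [CommGroup G] {A B : Finset G} (hAB : #A ≤ #B)
    (hB : ∀ x ∈ B, orderOf x = 0 ∨ #B < orderOf x) :
    ∃ f : G → G, Set.InjOn f A ∧ ∀ a ∈ A, f a ∈ B ∧ a * f a ∉ A := by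
  classical
  obtain ⟨g, hg, hgB⟩ := (all_card_le_biUnion_card_iff_exists_injective
    fun a : A ↦ {b ∈ B | (a : G) * b ∉ A}).1 fun s ↦ calc
      #s = #(s.map (Function.Embedding.subtype _)) := (card_map _).symm
      _ ≤ #{b ∈ B | ∃ a ∈ s.map (Function.Embedding.subtype _), a * b ∉ A} :=
        card_le_card_filter_exists_mul_notMem_s5 hAB hB fun a ha ↦ by
          obtain ⟨a, -, rfl⟩ := mem_map.1 ha
          exact a.2
      _ ≤ #(s.biUnion _) := card_le_card fun b hb ↦ by
        simp only [mem_filter, mem_map, Function.Embedding.coe_subtype] at hb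
        obtain ⟨hb, _, ⟨a, ha, rfl⟩, hab⟩ := hb
        exact mem_biUnion.2 ⟨a, ha, mem_filter.2 ⟨hb, hab⟩⟩
  refine ⟨fun x ↦ if hx : x ∈ A then g ⟨x, hx⟩ else 1, fun x hx y hy hxy ↦ ?_, fun a ha ↦ ?_⟩
  · simp only [mem_coe] at hx hy
    exact congrArg Subtype.val (hg (by simpa [hx, hy] using hxy))
  · simpa [ha] using hgB ⟨a, ha⟩

end Finset

theorem stmt_5_general {G : Type*} [CommGroup G]
    (A B : Finset G)
    (hcard : A.card = B.card)
    (hChowla : ∀ x ∈ B, orderOf x = 0 ∨ B.card < orderOf x) :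
    ∃ f : G → G, Set.BijOn f (A : Set G) (B : Set G) ∧ ∀ a ∈ A, a * f a ∉ A := by
  obtain ⟨f, hinj, hf⟩ := exists_injOn_forall_mul_notMem hcard.le hChowla
  have hmaps : Set.MapsTo f A B := fun a ha ↦ (hf a ha).1
  exact ⟨f, ⟨hmaps, hinj, surjOn_of_injOn_of_card_le f hmaps hinj hcard.ge⟩, fun a ha ↦ (hf a ha).2⟩

theorem stmt_5 {G : Type*} [CommGroup G]
    (A B : Finset G) (hA : A.Nonempty) (hB : B.Nonempty)
    (hcard : A.card = B.card)
    (hChowla : ∀ x ∈ B, orderOf x = 0 ∨ B.card < orderOf x) :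
    ∃ f : G → G, Set.BijOn f (A : Set G) (B : Set G) ∧ ∀ a ∈ A, a * f a ∉ A :=
  stmt_5_general A B hcard hChowla
end

section
/- Let G be an abelian group possessing at least one finite nontrivial proper subgroup, and let n₀ denote the minimal size of such a subgroup. Let n be an integer with n₀ ≤ n < |G| and n ≢ n₀ − 1 (mod n₀). Then there exist finite subsets A, B ⊆ G with 1 ∉ B, |A| = |B| = n, and such that no bijection f : A → B satisfies a·f(a) ∉ A for all a ∈ A. -/
/-! Let `H` be a finite nontrivial subgroup of order `m` and write `n = qm + r` with `q ≥ 1`; the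
congruence condition says exactly that `r + 1 < m`. Take for `A` a union of `q` left cosets of `H`
together with `r` points of a further coset, and for `B` a set of `n` nonidentity elements with at
least `r + 1` of them in `H`. Only `n - r - 1 < qm` points of `B` lie outside `H`, so every injection
`A → B` sends some point `a` of the full cosets into `H`, and then `a * f a ∈ aH ⊆ A`. -/

open Set Pointwise

theorem exists_notMem_of_encard_lt {α : Type*} {s : Set α} (hs : s.encard < ENat.card α) :
    ∃ x, x ∉ s :=
  ne_univ_iff_exists_notMem s |>.1 fun h => by simp [h] at hs

section

variable {G : Type*} [Group G]

def IsUnionOfLeftCosets (H : Subgroup G) (K : Set G) : Prop :=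
  ∀ a ∈ K, ∀ h ∈ H, a * h ∈ K

def Unmatchable (A B : Set G) : Prop :=
  ¬ ∃ f : G → G, BijOn f A B ∧ ∀ a ∈ A, a * f a ∉ A

theorem IsUnionOfLeftCosets.unmatchable {A B K : Set G} {H : Subgroup G}
    (hK : IsUnionOfLeftCosets H K) (hKA : K ⊆ A) (hB : B.encard < K.encard + (B ∩ H).encard) :
    Unmatchable A B := by
  rintro ⟨f, hf, hfA⟩
  obtain ⟨a, haK, hfa⟩ : ∃ a ∈ K, f a ∈ H := by
    by_contra! hKH
    have hmaps : MapsTo f K (B \ H) := fun a ha => ⟨hf.mapsTo (hKA ha), hKH a ha⟩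
    have hle : K.encard ≤ (B \ H).encard :=
      (hf.injOn.mono hKA).encard_image.symm.trans_le (encard_le_encard hmaps.image_subset)
    rw [← encard_sdiff_add_encard_inter B H] at hB
    exact hB.not_ge (by gcongr)
  exact hfA a (hKA haK) (hKA (hK a haK _ hfa))

theorem Subgroup.encard_coe (H : Subgroup G) [Finite H] : (H : Set G).encard = Nat.card H :=
  ENat.card_eq_coe_natCard H

theorem isUnionOfLeftCosets_smul (H : Subgroup G) (x : G) :
    IsUnionOfLeftCosets H (x • (H : Set G)) := by
  rintro _ ⟨h, hh, rfl⟩ h' hh'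
  exact ⟨h * h', H.mul_mem hh hh', (mul_assoc _ _ _).symm⟩

theorem IsUnionOfLeftCosets.disjoint_smul {K : Set G} {H : Subgroup G} {x : G}
    (hK : IsUnionOfLeftCosets H K) (hx : x ∉ K) : Disjoint K (x • (H : Set G)) := by
  rw [disjoint_right]
  rintro _ ⟨h, hh, rfl⟩ hxh
  exact hx (by simpa using hK _ hxh h⁻¹ (H.inv_mem hh))

theorem exists_isUnionOfLeftCosets_encard_eq (H : Subgroup G) [Finite H] (k : ℕ)
    (hk : (k * Nat.card H : ℕ∞) ≤ ENat.card G) :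
    ∃ K : Set G, IsUnionOfLeftCosets H K ∧ K.encard = k * Nat.card H := by
  induction k with
  | zero => exact ⟨∅, fun _ h => h.elim, by simp⟩
  | succ k ih =>
    have hlt : (k * Nat.card H : ℕ∞) < (k + 1) * Nat.card H := by
      norm_cast; exact Nat.mul_lt_mul_of_pos_right (Nat.lt_succ_self k) Nat.card_pos
    obtain ⟨K, hK, hKcard⟩ := ih (hlt.le.trans (mod_cast hk))
    obtain ⟨x, hx⟩ := exists_notMem_of_encard_lt (hKcard ▸ hlt.trans_le (mod_cast hk))
    refine ⟨K ∪ x • (H : Set G), ?_, ?_⟩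
    · rintro a (ha | ha) h hh
      exacts [Or.inl (hK a ha h hh), Or.inr (isUnionOfLeftCosets_smul H x a ha h hh)]
    · rw [encard_union_eq (hK.disjoint_smul hx), encard_smul_set, H.encard_coe, hKcard]
      push_cast
      ring

theorem exists_isUnionOfLeftCosets_subset_encard_eq (H : Subgroup G) [Finite H] {n : ℕ}
    (hn : (n : ℕ∞) < ENat.card G) :
    ∃ K A : Set G, K ⊆ A ∧ IsUnionOfLeftCosets H K ∧
      K.encard = (n / Nat.card H * Nat.card H : ℕ) ∧ A.encard = n := by
  have hqn : n / Nat.card H * Nat.card H ≤ n := Nat.div_mul_le_self n _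
  obtain ⟨K, hK, hKcard⟩ := exists_isUnionOfLeftCosets_encard_eq H (n / Nat.card H)
    (le_trans (mod_cast hqn) hn.le)
  obtain ⟨x, hx⟩ :=
    exists_notMem_of_encard_lt ((show K.encard ≤ n by rw [hKcard]; exact_mod_cast hqn).trans_lt hn)
  obtain ⟨R, hR, hRcard⟩ := exists_subset_encard_eq (s := x • (H : Set G)) (k := n % Nat.card H)
    (by rw [encard_smul_set, H.encard_coe]; exact_mod_cast (Nat.mod_lt n Nat.card_pos).le)
  refine ⟨K, K ∪ R, subset_union_left, hK, by exact_mod_cast hKcard, ?_⟩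
  rw [encard_union_eq ((hK.disjoint_smul hx).mono_right hR), hKcard, hRcard]
  exact_mod_cast Nat.div_add_mod' n _

theorem exists_one_notMem_encard_eq_le_encard_inter (H : Subgroup G) [Finite H] {n r : ℕ}
    (hr : r < Nat.card H) (hrn : r ≤ n) (hn : (n : ℕ∞) < ENat.card G) :
    ∃ B : Set G, 1 ∉ B ∧ B.encard = n ∧ (r : ℕ∞) ≤ (B ∩ H).encard := by
  obtain ⟨S, hS, hScard⟩ := exists_subset_encard_eq (s := (H : Set G) \ {1}) (k := r) <| by
    rw [← ENat.lt_add_one_iff (encard_ne_top_iff.2 (toFinite _)),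
      encard_sdiff_singleton_add_one H.one_mem, H.encard_coe]
    exact_mod_cast hr
  obtain ⟨B, hSB, hB, hBcard⟩ := exists_superset_subset_encard_eq (t := univ \ {1}) (k := n)
    (hS.trans (sdiff_subset_sdiff_left (subset_univ _))) (hScard ▸ mod_cast hrn) <| by
    rw [← ENat.lt_add_one_iff' (ENat.natCast_ne_top n), encard_sdiff_singleton_add_one (mem_univ 1),
      encard_univ]
    exact hn
  exact ⟨B, fun h => (hB h).2 rfl, hBcard,
    hScard ▸ encard_le_encard (subset_inter hSB (hS.trans sdiff_subset))⟩

end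

theorem stmt_6_general {G : Type*} [CommGroup G] (n₀ n : ℕ)
    (h₀ : ∃ H : Subgroup G, Finite H ∧ H ≠ ⊥ ∧ H ≠ ⊤ ∧ Nat.card H = n₀)
    (hn₀ : n₀ ≤ n) (hn : (n : Cardinal) < Cardinal.mk G)
    (hmod : ¬ n ≡ n₀ - 1 [MOD n₀]) :
    ∃ A B : Finset G, (1 : G) ∉ B ∧ A.card = n ∧ B.card = n ∧
      ¬ ∃ f : G → G, Set.BijOn f (A : Set G) (B : Set G) ∧ ∀ a ∈ A, a * f a ∉ A := by
  obtain ⟨H, hH, hH_ne_bot, -, rfl⟩ := h₀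
  have hn' : (n : ℕ∞) < ENat.card G := Cardinal.natCast_lt_toENat.2 hn
  have hr : n % Nat.card H + 1 < Nat.card H := by
    have h1 := (Subgroup.one_lt_card_iff_ne_bot H).2 hH_ne_bot
    have h2 := Nat.mod_lt n (zero_lt_one.trans h1)
    have h3 : n % Nat.card H ≠ Nat.card H - 1 := fun h =>
      hmod (h.trans (Nat.mod_eq_of_lt (by omega)).symm)
    omega
  obtain ⟨K, A, hKA, hK, hKcard, hAcard⟩ := exists_isUnionOfLeftCosets_subset_encard_eq H hn'
  obtain ⟨B, h1B, hBcard, hBH⟩ := exists_one_notMem_encard_eq_le_encard_inter H hr (by omega) hn'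
  lift A to Finset G using finite_of_encard_eq_coe hAcard
  lift B to Finset G using finite_of_encard_eq_coe hBcard
  refine ⟨A, B, h1B, by simpa using hAcard, by simpa using hBcard, hK.unmatchable hKA ?_⟩
  calc (B : Set G).encard = (n / Nat.card H * Nat.card H : ℕ) + (n % Nat.card H : ℕ) := by
        rw [hBcard, ← Nat.cast_add, Nat.div_add_mod']
    _ < K.encard + (n % Nat.card H + 1 : ℕ) := by
        rw [hKcard]; exact_mod_cast Nat.lt_add_one _
    _ ≤ K.encard + ((B : Set G) ∩ H).encard := by gcongr

theorem stmt_6 {G : Type*} [CommGroup G] (n₀ n : ℕ)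
    (h₀ : ∃ H : Subgroup G, Finite H ∧ H ≠ ⊥ ∧ H ≠ ⊤ ∧ Nat.card H = n₀)
    (hmin : ∀ H : Subgroup G, Finite H → H ≠ ⊥ → H ≠ ⊤ → n₀ ≤ Nat.card H)
    (hn₀ : n₀ ≤ n) (hn : (n : Cardinal) < Cardinal.mk G)
    (hmod : ¬ n ≡ n₀ - 1 [MOD n₀]) :
    ∃ A B : Finset G, (1 : G) ∉ B ∧ A.card = n ∧ B.card = n ∧
      ¬ ∃ f : G → G, Set.BijOn f (A : Set G) (B : Set G) ∧ ∀ a ∈ A, a * f a ∉ A :=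
  stmt_6_general n₀ n h₀ hn₀ hn hmod
end

section
/- Let G be an abelian group with at least one finite nontrivial proper subgroup, and let n be an integer with n₀(G) ≤ n < |G|. Then there exist subsets A, B ⊆ G with 1 ∉ B, |A| = |B| = n, and (A,B) unmatchable, if and only if there exists a finite subgroup H of G with |H| ≤ n and |H| not dividing n+1. -/
/-!
If `(A, B)` is unmatchable, Hall's theorem yields `A' ⊆ A` having fewer than `#A'` elements
`b ∈ B` with `A' * b ⊄ A`; the remaining elements of `B`, together with `1`, form `B'` with
`A' * B' ⊆ A` and `#A' + #B' ≥ n + 2`. A weak Kneser theorem, proved by Dyson e-transforms, gives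
a nonempty `S ⊆ A' * B'` with `#S + #H ≥ n + 2` for `H` the stabilizer of `S`. As `#H` divides
`#S` and `0 < n + 1 - #S < #H`, it does not divide `n + 1`.

Conversely, write `n = q #H + r`, where `r ≠ #H - 1` because `#H ∤ n + 1`. Let `A` consist of `q`
cosets of `H` and `r` points of a further coset, and let `B ⊇ H \ {1}` avoid `1`. In a matching,
an element matched into `H \ {1}` cannot lie in a full coset, so the `#H - 1` such elements are
among the `r` extra points.
-/

open Finset MulAction
open scoped Pointwise

theorem Subgroup.card_dvd_card_of_mul_eq {G : Type*} [Group G] (N : Subgroup G) {s : Set G}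
    (hs : s * N = s) : Nat.card N ∣ Nat.card s := by
  rw [← hs, ← QuotientGroup.preimage_image_mk_eq_mul, QuotientGroup.card_preimage_mk]
  exact dvd_mul_right _ _

theorem Finset.card_le_card_of_div_mem {G : Type*} [Group G] {H : Subgroup G} [Finite H]
    {s : Finset G} (hs : ∀ a ∈ s, ∀ b ∈ s, a / b ∈ H) : #s ≤ Nat.card H := by
  obtain rfl | ⟨b, hb⟩ := s.eq_empty_or_nonempty
  · simp
  calc #s = Nat.card s := (Nat.card_eq_finsetCard s).symm
    _ ≤ Nat.card H := Nat.card_le_card_of_injective (fun a : s ↦ (⟨a / b, hs a a.2 b hb⟩ : H))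
        fun a a' h ↦ Subtype.ext <| div_left_injective (congrArg Subtype.val h)

theorem Finset.exists_bijOn_of_card_le_card_filter {α β : Type*} [DecidableEq β] [Nonempty β]
    {A : Finset α} {B : Finset β} (r : α → β → Prop) [DecidableRel r] (hAB : #B ≤ #A)
    (hall : ∀ s ⊆ A, #s ≤ #{b ∈ B | ∃ a ∈ s, r a b}) :
    ∃ f : α → β, Set.BijOn f A B ∧ ∀ a ∈ A, r a (f a) := by
  classical
  obtain ⟨g, hg, hgr⟩ := (all_card_le_biUnion_card_iff_exists_injective
    fun a : A ↦ {b ∈ B | r a b}).1 fun s ↦ by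
      convert hall (s.map (.subtype _)) (by simp +contextual [subset_iff]) using 2
      · simp
      · ext; simp [and_left_comm]
  simp only [mem_filter] at hgr
  let f x := if hx : x ∈ A then g ⟨x, hx⟩ else Classical.arbitrary β
  have hf : ∀ a : A, f a = g a := fun a ↦ dif_pos a.2
  have hmaps : Set.MapsTo f A B := fun a ha ↦ hf ⟨a, ha⟩ ▸ (hgr _).1
  have hinj : Set.InjOn f A := fun a ha a' ha' h ↦ by
    simpa using hg ((hf ⟨a, ha⟩).symm.trans (h.trans (hf ⟨a', ha'⟩)))
  exact ⟨f, ⟨hmaps, hinj, surjOn_of_injOn_of_card_le f hmaps hinj hAB⟩,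
    fun a ha ↦ hf ⟨a, ha⟩ ▸ (hgr ⟨a, ha⟩).2⟩

theorem Finset.exists_notMem_of_card_lt_mk {α : Type*} (s : Finset α)
    (hs : (#s : Cardinal) < Cardinal.mk α) : ∃ x, x ∉ s := by
  by_contra! h
  refine hs.not_ge (le_of_eq ?_)
  calc Cardinal.mk α = Cardinal.mk (s : Set α) := by
        rw [Set.eq_univ_of_forall h, Cardinal.mk_univ]
    _ = #s := Cardinal.mk_coe_finset

theorem Finset.exists_superset_disjoint_card_eq {α : Type*} [DecidableEq α] {s u : Finset α}
    (hsu : Disjoint s u) {m : ℕ} (hsm : #s ≤ m) (hm : ((m + #u : ℕ) : Cardinal) ≤ Cardinal.mk α) :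
    ∃ t, s ⊆ t ∧ Disjoint t u ∧ #t = m := by
  induction m, hsm using Nat.le_induction with
  | base => exact ⟨s, subset_rfl, hsu, rfl⟩
  | succ m hsm ih =>
    obtain ⟨t, hst, htu, rfl⟩ := ih (le_trans (by norm_cast; omega) hm)
    obtain ⟨x, hx⟩ := exists_notMem_of_card_lt_mk (t ∪ u)
      (lt_of_lt_of_le (by norm_cast; grind [card_union_le]) hm)
    rw [mem_union, not_or] at hx
    exact ⟨insert x t, hst.trans (subset_insert _ _), disjoint_insert_left.2 ⟨hx.2, htu⟩,
      card_insert_of_notMem hx.1⟩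

section CommGroup

variable {G : Type*} [CommGroup G] [DecidableEq G]

theorem Finset.card_stabilizer_dvd_card (s : Finset G) : Nat.card (stabilizer G s) ∣ #s := by
  simpa using (stabilizer G (s : Set G)).card_dvd_card_of_mul_eq (mul_stabilizer_self _)

theorem Finset.finite_stabilizer {s : Finset G} (hs : s.Nonempty) : Finite (stabilizer G s) := by
  simpa using (stabilizer_finite (G := G) (s := (s : Set G)) hs s.finite_toSet).to_subtype

/-- If every quotient of two elements of `B` stabilizes `A`, then `B` lies in a coset of that
stabilizer and `S = b • A` works; otherwise a Dyson e-transform shrinks `B`, shrinks `A * B` and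
keeps `#A + #B`. -/
theorem Finset.exists_subset_mul_card_add_card_le {A B : Finset G} (hA : A.Nonempty)
    (hB : B.Nonempty) : ∃ S ⊆ A * B, S.Nonempty ∧ #A + #B ≤ #S + Nat.card (stabilizer G S) := by
  induction hk : #B using Nat.strong_induction_on generalizing A B with
  | _ k ih =>
  subst hk
  by_cases hper : ∀ c ∈ B, ∀ b ∈ B, c / b ∈ stabilizer G A
  · obtain ⟨b, hb⟩ := hB
    refine ⟨b • A, ?_, hA.smul_finset, ?_⟩
    · rw [mul_comm]; exact smul_finset_subset_mul hb
    · have := finite_stabilizer hA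
      rw [card_smul_finset, stabilizer_smul_eq_right]
      have := card_le_card_of_div_mem hper
      omega
  · push Not at hper
    obtain ⟨c, hc, b, hb, hcb⟩ := hper
    rw [mem_stabilizer_finset'] at hcb
    push Not at hcb
    obtain ⟨a, ha, hac⟩ := hcb
    set x := mulDysonETransform (a / b) (A, B)
    have hbx : b ∈ x.2 := mem_inter.2 ⟨hb, mem_inv_smul_finset_iff.2 (by simpa)⟩
    have hcx : c ∉ x.2 := fun h ↦ hac <| by
      have := mem_inv_smul_finset_iff.1 (mem_inter.1 h).2
      rwa [smul_eq_mul, div_mul_comm] at this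
    obtain ⟨S, hS, hSne, hcard⟩ := ih #x.2 (card_lt_card ⟨inter_subset_left, fun h ↦ hcx (h hc)⟩)
      (hA.mono subset_union_left) ⟨b, hbx⟩ rfl
    exact ⟨S, hS.trans (mulDysonETransform.subset _ _), hSne,
      (mulDysonETransform.card _ (A, B)).symm.trans_le hcard⟩

theorem exists_mul_subset_of_not_exists_bijOn {A B : Finset G} (hB : (1 : G) ∉ B) (hAB : #B ≤ #A)
    (h : ¬ ∃ f : G → G, Set.BijOn f A B ∧ ∀ a ∈ A, a * f a ∉ A) :
    ∃ A' B' : Finset G, A'.Nonempty ∧ (1 : G) ∈ B' ∧ A' * B' ⊆ A ∧ #B + 2 ≤ #A' + #B' := by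
  obtain ⟨s, hsA, hs⟩ : ∃ s ⊆ A, #{b ∈ B | ∃ a ∈ s, a * b ∉ A} < #s := by
    by_contra! hall
    exact h (exists_bijOn_of_card_le_card_filter (fun a b ↦ a * b ∉ A) hAB hall)
  refine ⟨s, insert 1 {b ∈ B | ∀ a ∈ s, a * b ∈ A}, card_pos.1 (by omega), mem_insert_self _ _,
    ?_, ?_⟩
  · rintro _ hx
    obtain ⟨a, ha, b, hb, rfl⟩ := mem_mul.1 hx
    obtain rfl | hb := mem_insert.1 hb
    · simpa using hsA ha
    · exact (mem_filter.1 hb).2 a ha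
  · rw [card_insert_of_notMem (fun h ↦ hB (mem_filter.1 h).1)]
    have := card_filter_add_card_filter_not (s := B) (fun b ↦ ∃ a ∈ s, a * b ∉ A)
    simp only [not_exists, not_and, not_not] at this
    omega

theorem exists_subgroup_card_le_not_dvd_of_mul_subset {A A' B' : Finset G} (hA' : A'.Nonempty)
    (hB' : B'.Nonempty) (hsub : A' * B' ⊆ A) (hcard : #A + 2 ≤ #A' + #B') :
    ∃ H : Subgroup G, Finite H ∧ Nat.card H ≤ #A ∧ ¬ Nat.card H ∣ #A + 1 := by
  obtain ⟨S, hS, hSne, hSH⟩ := exists_subset_mul_card_add_card_le hA' hB'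
  have hSA : #S ≤ #A := card_le_card (hS.trans hsub)
  have hHS : Nat.card (stabilizer G S) ∣ #S := card_stabilizer_dvd_card S
  have hHS' := Nat.le_of_dvd hSne.card_pos hHS
  refine ⟨stabilizer G S, finite_stabilizer hSne, hHS'.trans hSA, fun hdvd ↦ ?_⟩
  have := Nat.le_of_dvd (by omega) (Nat.dvd_sub hdvd hHS)
  omega

theorem card_le_card_sdiff_of_surjOn {A B T E : Finset G} {f : G → G} (hf : Set.SurjOn f A B)
    (hfA : ∀ a ∈ A, a * f a ∉ A) (hTA : T ⊆ A) (hEB : E ⊆ B)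
    (hE : ∀ e ∈ E, e ∈ stabilizer G T) : #E ≤ #(A \ T) :=
  card_le_card_of_surjOn f fun e he ↦ by
    obtain ⟨a, ha, rfl⟩ := hf (hEB he)
    refine ⟨a, mem_sdiff.2 ⟨ha, fun haT ↦ hfA a ha (hTA ?_)⟩, rfl⟩
    rw [mul_comm]
    exact mem_stabilizer_finset'.1 (hE _ he) haT

variable (H : Subgroup G) [Finite H]

theorem Subgroup.le_stabilizer_smul_toFinset (x : G) :
    H ≤ stabilizer G (x • (H : Set G).toFinite.toFinset) := fun g hg ↦ by
  rw [mem_stabilizer_finset']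
  intro z hz
  obtain ⟨y, hy, rfl⟩ := mem_smul_finset.1 hz
  refine mem_smul_finset.2
    ⟨g * y, (Set.Finite.mem_toFinset _).2 (H.mul_mem hg ((Set.Finite.mem_toFinset _).1 hy)), ?_⟩
  simp only [smul_eq_mul, mul_left_comm]

theorem Subgroup.disjoint_smul_toFinset {T : Finset G} (hT : H ≤ stabilizer G T) {x : G}
    (hx : x ∉ T) : Disjoint T (x • (H : Set G).toFinite.toFinset) := by
  rw [disjoint_left]
  intro z hzT hz
  obtain ⟨y, hy, rfl⟩ := mem_smul_finset.1 hz
  refine hx ?_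
  have := mem_stabilizer_finset'.1 (hT (H.inv_mem ((Set.Finite.mem_toFinset _).1 hy))) hzT
  simpa using this

theorem Subgroup.exists_le_stabilizer_card_eq_mul (k : ℕ)
    (hk : ((k * Nat.card H : ℕ) : Cardinal) ≤ Cardinal.mk G) :
    ∃ T : Finset G, H ≤ stabilizer G T ∧ #T = k * Nat.card H := by
  induction k with
  | zero => exact ⟨∅, by simp, by simp⟩
  | succ k ih =>
    have hlt : k * Nat.card H < (k + 1) * Nat.card H :=
      Nat.mul_lt_mul_of_pos_right (lt_add_one k) Nat.card_pos
    obtain ⟨T, hTH, hT⟩ := ih (le_trans (by exact_mod_cast hlt.le) hk)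
    obtain ⟨x, hx⟩ := exists_notMem_of_card_lt_mk T
      (lt_of_lt_of_le (by exact_mod_cast hT ▸ hlt) hk)
    refine ⟨T ∪ x • (H : Set G).toFinite.toFinset, fun g hg ↦ ?_, ?_⟩
    · rw [mem_stabilizer_finset']
      intro y hy
      rw [mem_union] at hy ⊢
      exact hy.imp (fun hy ↦ mem_stabilizer_finset'.1 (hTH hg) hy)
        (fun hy ↦ mem_stabilizer_finset'.1 (H.le_stabilizer_smul_toFinset x hg) hy)
    · rw [card_union_of_disjoint (H.disjoint_smul_toFinset hTH hx), card_smul_finset, hT,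
        ← Nat.card_eq_card_finite_toFinset, add_mul, one_mul]
      rfl

theorem Subgroup.exists_not_exists_bijOn_of_not_dvd {n : ℕ} (hle : Nat.card H ≤ n)
    (hndvd : ¬ Nat.card H ∣ n + 1) (hn : (n : Cardinal) < Cardinal.mk G) :
    ∃ A B : Finset G, (1 : G) ∉ B ∧ #A = n ∧ #B = n ∧
      ¬ ∃ f : G → G, Set.BijOn f (A : Set G) (B : Set G) ∧ ∀ a ∈ A, a * f a ∉ A := by
  set HF := (H : Set G).toFinite.toFinset
  have hHF : #HF = Nat.card H := (Nat.card_eq_card_finite_toFinset _).symm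
  have hqn : n / Nat.card H * Nat.card H ≤ n := Nat.div_mul_le_self n _
  obtain ⟨T, hTH, hT⟩ := H.exists_le_stabilizer_card_eq_mul (n / Nat.card H)
    (le_trans (by exact_mod_cast hqn) hn.le)
  obtain ⟨x, hx⟩ := exists_notMem_of_card_lt_mk T (lt_of_le_of_lt (by exact_mod_cast hT ▸ hqn) hn)
  obtain ⟨P, hPx, hP⟩ := exists_subset_card_eq (s := x • HF) (n := n % Nat.card H)
    (by rw [card_smul_finset, hHF]; exact (Nat.mod_lt _ Nat.card_pos).le)
  have hTP : Disjoint T P := (H.disjoint_smul_toFinset hTH hx).mono_right hPx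
  obtain ⟨B, hEB, hB1, hB⟩ := exists_superset_disjoint_card_eq (s := HF.erase 1) (u := {1})
    (by simp) (m := n) (by rw [card_erase_of_mem (by simp [HF, H.one_mem]), hHF]; omega)
    (by exact_mod_cast Cardinal.add_one_le_of_lt hn)
  refine ⟨T ∪ P, B, disjoint_singleton_right.1 hB1,
    by rw [card_union_of_disjoint hTP, hT, hP, Nat.div_add_mod'], hB, ?_⟩
  rintro ⟨f, hf, hfA⟩
  have := card_le_card_sdiff_of_surjOn hf.surjOn hfA subset_union_left hEB
    fun e he ↦ hTH ((Set.Finite.mem_toFinset _).1 (mem_of_mem_erase he))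
  rw [union_sdiff_left, sdiff_eq_self_of_disjoint hTP.symm, hP,
    card_erase_of_mem (by simp [HF, H.one_mem]), hHF] at this
  have := Nat.div_add_mod n (Nat.card H)
  have := Nat.mod_lt n (Nat.card_pos (α := H))
  exact hndvd ⟨n / Nat.card H + 1, by rw [mul_add]; omega⟩

end CommGroup

theorem stmt_7_general {G : Type*} [CommGroup G] (n : ℕ)
    (hn : (n : Cardinal) < Cardinal.mk G) :
    (∃ A B : Finset G, (1 : G) ∉ B ∧ A.card = n ∧ B.card = n ∧
      ¬ ∃ f : G → G, Set.BijOn f (A : Set G) (B : Set G) ∧ ∀ a ∈ A, a * f a ∉ A) ↔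
    (∃ H : Subgroup G, Finite H ∧ Nat.card H ≤ n ∧ ¬ (Nat.card H ∣ (n + 1))) := by
  classical
  constructor
  · rintro ⟨A, B, hB1, rfl, hB, hA⟩
    obtain ⟨A', B', hA', hB', hsub, hcard⟩ := exists_mul_subset_of_not_exists_bijOn hB1 hB.le hA
    exact exists_subgroup_card_le_not_dvd_of_mul_subset hA' ⟨1, hB'⟩ hsub (hB ▸ hcard)
  · rintro ⟨H, hH, hle, hndvd⟩
    exact H.exists_not_exists_bijOn_of_not_dvd hle hndvd hn

theorem stmt_7 {G : Type*} [CommGroup G] (n₀ n : ℕ)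
    (h₀ : ∃ H : Subgroup G, Finite H ∧ H ≠ ⊥ ∧ H ≠ ⊤ ∧ Nat.card H = n₀)
    (hmin : ∀ H : Subgroup G, Finite H → H ≠ ⊥ → H ≠ ⊤ → n₀ ≤ Nat.card H)
    (hn₀ : n₀ ≤ n) (hn : (n : Cardinal) < Cardinal.mk G) :
    (∃ A B : Finset G, (1 : G) ∉ B ∧ A.card = n ∧ B.card = n ∧
      ¬ ∃ f : G → G, Set.BijOn f (A : Set G) (B : Set G) ∧ ∀ a ∈ A, a * f a ∉ A) ↔
    (∃ H : Subgroup G, Finite H ∧ Nat.card H ≤ n ∧ ¬ (Nat.card H ∣ (n + 1))) :=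
  stmt_7_general n hn
end

section
/- Let G be an abelian group and (A,B) a pair of nonempty finite subsets with |A| = |B| that is unmatchable, witnessed by a decomposition A = S ∪ Y (disjoint), B = R ∪ Z (disjoint), where R ⊆ B is nonempty, S is a union of cosets of ⟨R⟩, and |Y| < |R|. Let H be a subgroup of G with H ∩ (SS⁻¹ ∪ RR⁻¹) = {1}, and let π : G → G/H be the quotient map. Then the pair (π(A), π(B)) is unmatchable in G/H. -/
/-!
If `s * r ∈ S` for `s ∈ S`, `r ∈ R`, then a matching of `(π A, π B)` cannot send any `π s` with
`s ∈ S ⊆ A` to some `π r` with `r ∈ R`, since `π s * π r = π (s * r) ∈ π A`; so it maps `π S`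
into `π Z`. As `H` meets `S S⁻¹` only in `1`, the quotient map is injective on `S`, whence
`|S| ≤ |π Z| ≤ |Z|`. But `|S| + |Y| = |R| + |Z|` and `|Y| < |R|` force `|Z| < |S|`.
-/

open Pointwise Set

theorem QuotientGroup.injOn_mk_of_inter_mul_inv_subset {G : Type*} [CommGroup G]
    {H : Subgroup G} {S : Set G} (hS : (H : Set G) ∩ (S * S⁻¹) ⊆ {1}) :
    InjOn (QuotientGroup.mk : G → G ⧸ H) S := by
  intro s₁ hs₁ s₂ hs₂ heq
  have hmem : s₁ * s₂⁻¹ ∈ (H : Set G) := by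
    rw [← div_eq_mul_inv]
    exact QuotientGroup.eq_iff_div_mem.1 heq
  exact mul_inv_eq_one.1 (hS ⟨hmem, mul_mem_mul hs₁ (inv_mem_inv.2 hs₂)⟩)

theorem mapsTo_image_of_mul_mem_of_not_mul_mem {G Q : Type*} [MulOneClass G] [MulOneClass Q]
    (π : G →* Q) {A S R Z : Set G} {f : Q → Q} (hSA : S ⊆ A)
    (hSR : ∀ s ∈ S, ∀ r ∈ R, s * r ∈ S) (hf : MapsTo f (π '' A) (π '' (R ∪ Z)))
    (hfA : ∀ a ∈ π '' A, a * f a ∉ π '' A) :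
    MapsTo f (π '' S) (π '' Z) := by
  rintro _ ⟨s, hs, rfl⟩
  have hsA : π s ∈ π '' A := mem_image_of_mem π (hSA hs)
  obtain ⟨b, hbRZ | hbZ, hb⟩ := hf hsA
  · exact absurd ⟨s * b, hSA (hSR s hs b hbRZ), by rw [map_mul, hb]⟩ (hfA _ hsA)
  · exact ⟨b, hbZ, hb⟩

theorem stmt_10_general {G : Type*} [CommGroup G] [DecidableEq G]
    (A B S Y R Z : Finset G)
    (hcard : A.card = B.card)
    (hAdec : A = S ∪ Y) (hSY : Disjoint S Y)
    (hBdec : B = R ∪ Z) (hRZ : Disjoint R Z)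
    (hScosets : S.Nonempty ∧ ∀ s ∈ S, ∀ g ∈ Subgroup.closure (R : Set G), s * g ∈ S)
    (hYR : Y.card < R.card)
    (H : Subgroup G)
    (hH : (H : Set G) ∩ ((S : Set G) * (S : Set G)⁻¹ ∪ (R : Set G) * (R : Set G)⁻¹) = {1}) :
    ¬ ∃ f : G ⧸ H → G ⧸ H,
      Set.BijOn f (QuotientGroup.mk '' (A : Set G)) (QuotientGroup.mk '' (B : Set G)) ∧
      ∀ a ∈ QuotientGroup.mk '' (A : Set G), a * f a ∉ QuotientGroup.mk '' (A : Set G) := by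
  classical
  rintro ⟨f, hbij, hfA⟩
  have hSA : (S : Set G) ⊆ A := by simp [hAdec]
  have hπS : InjOn (QuotientGroup.mk : G → G ⧸ H) S :=
    QuotientGroup.injOn_mk_of_inter_mul_inv_subset
      (hH ▸ inter_subset_inter_right _ subset_union_left)
  have hfS : MapsTo f (QuotientGroup.mk '' (S : Set G)) (QuotientGroup.mk '' (Z : Set G)) :=
    mapsTo_image_of_mul_mem_of_not_mul_mem (QuotientGroup.mk' H) hSA
      (fun s hs r hr ↦ hScosets.2 s hs r (Subgroup.subset_closure hr))
      (by simpa [hBdec] using hbij.mapsTo) hfA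
  have hSZ : S.card ≤ Z.card := calc
    S.card ≤ (Z.image QuotientGroup.mk : Finset (G ⧸ H)).card :=
      Finset.card_le_card_of_injOn (f ∘ QuotientGroup.mk)
        (fun s hs ↦ by simpa using hfS (mem_image_of_mem _ hs))
        ((hbij.injOn.mono (image_mono hSA)).comp hπS (mapsTo_image _ _))
    _ ≤ Z.card := Finset.card_image_le
  rw [hAdec, Finset.card_union_of_disjoint hSY, hBdec, Finset.card_union_of_disjoint hRZ] at hcard
  omega

theorem stmt_10 {G : Type*} [CommGroup G] [DecidableEq G]
    (A B S Y R Z : Finset G) (hA : A.Nonempty) (hB : B.Nonempty)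
    (hcard : A.card = B.card)
    (hR : R.Nonempty) (hRB : R ⊆ B)
    (hAdec : A = S ∪ Y) (hSY : Disjoint S Y)
    (hBdec : B = R ∪ Z) (hRZ : Disjoint R Z)
    (hScosets : S.Nonempty ∧ ∀ s ∈ S, ∀ g ∈ Subgroup.closure (R : Set G), s * g ∈ S)
    (hYR : Y.card < R.card)
    (H : Subgroup G)
    (hH : (H : Set G) ∩ ((S : Set G) * (S : Set G)⁻¹ ∪ (R : Set G) * (R : Set G)⁻¹) = {1}) :
    ¬ ∃ f : G ⧸ H → G ⧸ H,
      Set.BijOn f (QuotientGroup.mk '' (A : Set G)) (QuotientGroup.mk '' (B : Set G)) ∧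
      ∀ a ∈ QuotientGroup.mk '' (A : Set G), a * f a ∉ QuotientGroup.mk '' (A : Set G) :=
  stmt_10_general A B S Y R Z hcard hAdec hSY hBdec hRZ hScosets hYR H hH
end

section
/- Let K ⊆ L be a field extension, let n be a positive integer, let S and R be nonzero K-subspaces of L with the K-span of SR equal to S and dim_K S ≤ n, and let x ∈ R. Then x is algebraic over K with [K(x):K] ≤ n, and for each a ∈ S one has a·K(x) ⊆ S. -/
open Pointwise

/-! If a nonzero `K`-subspace `S` of `L` satisfies `S * R ⊆ S`, then for `x ∈ R` and `0 ≠ a ∈ S`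
the map `y ↦ a * y` embeds `K[x]` into `S`. Hence `K[x]` has dimension at most `dim S ≤ n`, so `x`
is algebraic, `K[x] = K(x)`, and `a * K(x) ⊆ S`. -/

theorem Submodule.mul_mem_of_mem_adjoin {K A : Type*} [CommSemiring K] [Semiring A] [Algebra K A]
    (S : Submodule K A) {X : Set A} (hX : ∀ s ∈ S, ∀ x ∈ X, s * x ∈ S)
    {y : A} (hy : y ∈ Algebra.adjoin K X) : ∀ s ∈ S, s * y ∈ S := by
  induction hy using Algebra.adjoin_induction with
  | mem x hx => exact fun s hs => hX s hs x hx
  | algebraMap r =>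
    intro s hs
    rw [← Algebra.commutes, ← Algebra.smul_def]
    exact S.smul_mem r hs
  | add y z _ _ hy hz => exact fun s hs => mul_add s y z ▸ S.add_mem (hy s hs) (hz s hs)
  | mul y z _ _ hy hz => exact fun s hs => mul_assoc s y z ▸ hz _ (hy s hs)

theorem Submodule.rank_adjoin_le_of_mul_mem {K A : Type*} [CommRing K] [Ring A]
    [NoZeroDivisors A] [Algebra K A] (S : Submodule K A) {X : Set A}
    (hX : ∀ s ∈ S, ∀ x ∈ X, s * x ∈ S) {a : A} (ha : a ∈ S) (ha0 : a ≠ 0) :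
    Module.rank K (Algebra.adjoin K X) ≤ Module.rank K S :=
  LinearMap.rank_le_of_injective
    (((LinearMap.mulLeft K a).comp (Algebra.adjoin K X).val.toLinearMap).codRestrict S
      fun y => S.mul_mem_of_mem_adjoin hX y.2 a ha)
    fun _ _ h => Subtype.ext (mul_right_injective₀ ha0 (congrArg Subtype.val h))

theorem stmt_11_general {K L : Type*} [Field K] [Field L] [Algebra K L]
    (n : ℕ) (S R : Submodule K L) (hS : S ≠ ⊥)
    (hspan : Submodule.span K ((S : Set L) * (R : Set L)) = S)
    (hdim : Module.rank K S ≤ (n : Cardinal))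
    (x : L) (hx : x ∈ R) :
    IsAlgebraic K x ∧
    Module.rank K (IntermediateField.adjoin K {x}) ≤ (n : Cardinal) ∧
    ∀ a ∈ S, ∀ y ∈ IntermediateField.adjoin K {x}, a * y ∈ S := by
  have hmul : ∀ s ∈ S, ∀ y ∈ ({x} : Set L), s * y ∈ S := by
    rintro s hs y rfl
    exact hspan ▸ Submodule.subset_span (Set.mul_mem_mul hs hx)
  obtain ⟨a, ha, ha0⟩ := Submodule.exists_mem_ne_zero_of_ne_bot hS
  have hrank : Module.rank K (Algebra.adjoin K {x}) ≤ n :=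
    (S.rank_adjoin_le_of_mul_mem hmul ha ha0).trans hdim
  have halg : IsAlgebraic K x := by
    have : Module.Finite K (Algebra.adjoin K {x}) :=
      Module.rank_lt_aleph0_iff.mp (hrank.trans_lt (Cardinal.natCast_lt_aleph0 (n := n)))
    exact (IsIntegral.of_mem_of_fg _ (Module.Finite.iff_fg.mp this) x
      (Algebra.self_mem_adjoin_singleton K x)).isAlgebraic
  have hadjoin := IntermediateField.adjoin_simple_toSubalgebra_of_isAlgebraic halg
  refine ⟨halg, ?_, fun s hs y hy => S.mul_mem_of_mem_adjoin hmul (hadjoin ▸ hy) s hs⟩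
  rwa [← IntermediateField.rank_eq_rank_subalgebra, hadjoin]

theorem stmt_11 {K L : Type*} [Field K] [Field L] [Algebra K L]
    (n : ℕ) (hn : 0 < n) (S R : Submodule K L) (hS : S ≠ ⊥) (hR : R ≠ ⊥)
    (hspan : Submodule.span K ((S : Set L) * (R : Set L)) = S)
    (hdim : Module.rank K S ≤ (n : Cardinal))
    (x : L) (hx : x ∈ R) :
    IsAlgebraic K x ∧
    Module.rank K (IntermediateField.adjoin K {x}) ≤ (n : Cardinal) ∧
    ∀ a ∈ S, ∀ y ∈ IntermediateField.adjoin K {x}, a * y ∈ S :=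
  stmt_11_general n S R hS hspan hdim x hx
end

section
/- Let K ⊆ L be a field extension, and let R and S be finite-dimensional K-subspaces of L with S nonzero. Assume a·K(x) ⊆ S for all a ∈ S and x ∈ R. Then a·K(R) ⊆ S for all a ∈ S; moreover, [K(R):K] is finite and dim_K S is a positive integer multiple of [K(R):K]. -/
/-!
Multiplication by elements of `K(R)` preserves `S` because the elements of `L` that multiply
`S` into itself form an intermediate field: it is closed under inverses since multiplication by
a nonzero `y` is an injective, hence bijective, endomorphism of the finite-dimensional space `S`.
Hence `S` is a vector space over `F = K(R)`; multiplication by a nonzero `s ∈ S` embeds `F` into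
`S`, and the tower law gives `dim_K S = [F : K] · dim_F S` with `dim_F S > 0`.
-/

namespace Submodule

variable {K L : Type*} [Field K] [Field L] [Algebra K L]

def mulStabilizer (S : Submodule K L) [FiniteDimensional K S] : IntermediateField K L where
  carrier := {y | ∀ a ∈ S, a * y ∈ S}
  mul_mem' {x y} hx hy a ha := by
    rw [← mul_assoc]
    exact hy _ (hx a ha)
  one_mem' a ha := by rwa [mul_one]
  add_mem' {x y} hx hy a ha := by
    rw [mul_add]
    exact S.add_mem (hx a ha) (hy a ha)
  zero_mem' a _ := by rw [mul_zero]; exact S.zero_mem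
  algebraMap_mem' c a ha := by
    rw [mul_comm, ← Algebra.smul_def]
    exact S.smul_mem c ha
  inv_mem' y hy a ha := by
    obtain rfl | hy0 := eq_or_ne y 0
    · rw [inv_zero, mul_zero]; exact S.zero_mem
    have hinj : Function.Injective ((LinearMap.mulRight K y).restrict hy) := fun b c hbc =>
      Subtype.ext <| mul_right_cancel₀ hy0 (congrArg Subtype.val hbc)
    obtain ⟨b, hb⟩ := LinearMap.injective_iff_surjective.mp hinj ⟨a, ha⟩
    have hab : (b : L) * y = a := congrArg Subtype.val hb
    rw [← hab, mul_inv_cancel_right₀ hy0]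
    exact b.2

theorem mem_mulStabilizer {S : Submodule K L} [FiniteDimensional K S] {y : L} :
    y ∈ S.mulStabilizer ↔ ∀ a ∈ S, a * y ∈ S :=
  Iff.rfl

def extendScalarsOfMulMem (F : IntermediateField K L) (S : Submodule K L)
    (hmul : ∀ a ∈ S, ∀ y ∈ F, a * y ∈ S) : Submodule F L where
  carrier := S
  add_mem' := S.add_mem
  zero_mem' := S.zero_mem
  smul_mem' c a ha := by
    rw [Algebra.smul_def, mul_comm]
    exact hmul a ha c c.2

variable {F : IntermediateField K L} {S : Submodule K L}

theorem finiteDimensional_of_mul_mem [FiniteDimensional K S] (hS : S ≠ ⊥)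
    (hmul : ∀ a ∈ S, ∀ y ∈ F, a * y ∈ S) : FiniteDimensional K F := by
  obtain ⟨s, hsS, hs0⟩ := exists_mem_ne_zero_of_ne_bot hS
  let f : F →ₗ[K] S := (LinearMap.mulLeft K s ∘ₗ F.val.toLinearMap).codRestrict S
    fun y => hmul s hsS y y.2
  exact .of_injective f fun y z hyz =>
    Subtype.ext <| mul_left_cancel₀ hs0 (congrArg Subtype.val hyz)

theorem exists_finrank_eq_mul_finrank_of_mul_mem [FiniteDimensional K S] (hS : S ≠ ⊥)
    (hmul : ∀ a ∈ S, ∀ y ∈ F, a * y ∈ S) :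
    ∃ q : ℕ, 0 < q ∧ Module.finrank K S = q * Module.finrank K F := by
  have := finiteDimensional_of_mul_mem hS hmul
  let S' := extendScalarsOfMulMem F S hmul
  have : Module.Finite K S' := ‹FiniteDimensional K S›
  have : Module.Finite F S' := .of_restrictScalars_finite K F S'
  have : Module.Free F S' := .of_divisionRing F S'
  have htower : Module.finrank K S = Module.finrank F S' * Module.finrank K F := by
    rw [mul_comm]
    exact (Module.finrank_mul_finrank K F S').symm
  have hpos : 0 < Module.finrank K S := Nat.pos_of_ne_zero <| finrank_eq_zero.not.mpr hS
  exact ⟨_, pos_of_mul_pos_left (htower ▸ hpos) (Nat.zero_le _), htower⟩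

end Submodule

theorem stmt_12_general {K L : Type*} [Field K] [Field L] [Algebra K L]
    (R S : Submodule K L) (hSfin : Module.Finite K S)
    (hS : S ≠ ⊥)
    (h : ∀ a ∈ S, ∀ x ∈ R, ∀ y ∈ IntermediateField.adjoin K ({x} : Set L), a * y ∈ S) :
    (∀ a ∈ S, ∀ y ∈ IntermediateField.adjoin K (R : Set L), a * y ∈ S) ∧
    FiniteDimensional K (IntermediateField.adjoin K (R : Set L)) ∧
    ∃ q : ℕ, 0 < q ∧
      Module.finrank K S = q * Module.finrank K (IntermediateField.adjoin K (R : Set L)) := by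
  have hle : IntermediateField.adjoin K (R : Set L) ≤ S.mulStabilizer :=
    IntermediateField.adjoin_le_iff.mpr fun x hx a ha =>
      h a ha x hx x (IntermediateField.mem_adjoin_simple_self K x)
  have hmul : ∀ a ∈ S, ∀ y ∈ IntermediateField.adjoin K (R : Set L), a * y ∈ S :=
    fun a ha y hy => Submodule.mem_mulStabilizer.mp (hle hy) a ha
  exact ⟨hmul, Submodule.finiteDimensional_of_mul_mem hS hmul,
    Submodule.exists_finrank_eq_mul_finrank_of_mul_mem hS hmul⟩

theorem stmt_12 {K L : Type*} [Field K] [Field L] [Algebra K L]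
    (R S : Submodule K L) (hRfin : Module.Finite K R) (hSfin : Module.Finite K S)
    (hS : S ≠ ⊥)
    (h : ∀ a ∈ S, ∀ x ∈ R, ∀ y ∈ IntermediateField.adjoin K ({x} : Set L), a * y ∈ S) :
    (∀ a ∈ S, ∀ y ∈ IntermediateField.adjoin K (R : Set L), a * y ∈ S) ∧
    FiniteDimensional K (IntermediateField.adjoin K (R : Set L)) ∧
    ∃ q : ℕ, 0 < q ∧
      Module.finrank K S = q * Module.finrank K (IntermediateField.adjoin K (R : Set L)) :=
  stmt_12_general R S hSfin hS h
end

section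
/- Let K ⊊ L be a field extension and let A and B be n-dimensional K-subspaces of L with n > 0. If A is matched to B, then the K-linear span of the Minkowski product AB is not equal to A. -/
open Pointwise

/-- `a : Fin n → L` is an ordered basis of the `K`-subspace `A` of `L`. -/
def IsBasisOf {K L : Type*} [Field K] [Field L] [Algebra K L]
    (A : Submodule K L) {n : ℕ} (a : Fin n → L) : Prop :=
  LinearIndependent K a ∧ Submodule.span K (Set.range a) = A

/-- `A` is matched to `B` (both of dimension `n`): every ordered basis of `A`
can be matched to some ordered basis of `B`. -/
def MatchedTo {K L : Type*} [Field K] [Field L] [Algebra K L]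
    (A B : Submodule K L) (n : ℕ) : Prop :=
  ∀ a : Fin n → L, IsBasisOf A a →
    ∃ b : Fin n → L, IsBasisOf B b ∧
      ∀ i : Fin n, ((a i)⁻¹ • (A : Set L)) ∩ (B : Set L) ⊆
        (Submodule.span K (b '' {j | j ≠ i}) : Set L)

/-!
If `span (A * B) = A`, then `a₁ • B ⊆ A` for the first vector `a₁` of a basis of `A`, so
`B ⊆ a₁⁻¹ • A ∩ B`. Matching puts this inside the span of `b₂, …, bₙ`, which cannot contain `b₁ ∈ B`.
-/

theorem isBasisOf_basis {K L : Type*} [Field K] [Field L] [Algebra K L]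
    {A : Submodule K L} {n : ℕ} (e : Module.Basis (Fin n) K A) :
    IsBasisOf A (fun i => (e i : L)) := by
  refine ⟨e.linearIndependent.map' A.subtype A.ker_subtype, ?_⟩
  change Submodule.span K (Set.range (A.subtype ∘ e)) = A
  rw [Set.range_comp, ← Submodule.map_span, e.span_eq, Submodule.map_top,
    Submodule.range_subtype]

namespace IsBasisOf

variable {K L : Type*} [Field K] [Field L] [Algebra K L]
  {A : Submodule K L} {n : ℕ} {a : Fin n → L}

theorem mem (ha : IsBasisOf A a) (i : Fin n) : a i ∈ A := by
  rw [← ha.2]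
  exact Submodule.subset_span (Set.mem_range_self i)

theorem not_le_span_image_ne (ha : IsBasisOf A a) (i : Fin n) :
    ¬ A ≤ Submodule.span K (a '' {j | j ≠ i}) := fun hle =>
  ha.1.notMem_span_image (by simp) (hle (ha.mem i))

end IsBasisOf

theorem subset_inv_smul_of_span_mul_le {K L : Type*} [Field K] [Field L] [Algebra K L]
    {A B : Submodule K L} (hAB : Submodule.span K ((A : Set L) * (B : Set L)) ≤ A)
    {x : L} (hx : x ∈ A) (hx0 : x ≠ 0) :
    (B : Set L) ⊆ x⁻¹ • (A : Set L) := fun y hy =>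
  ⟨x * y, hAB (Submodule.subset_span (Set.mul_mem_mul hx hy)), inv_mul_cancel_left₀ hx0 y⟩

theorem stmt_14_general {K L : Type*} [Field K] [Field L] [Algebra K L]
    (n : ℕ) (hn : 0 < n) (A B : Submodule K L)
    (hA : Module.finrank K A = n)
    (h : MatchedTo A B n) :
    Submodule.span K ((A : Set L) * (B : Set L)) ≠ A := by
  intro hspan
  have : FiniteDimensional K A := FiniteDimensional.of_finrank_pos (hA ▸ hn)
  have ha := isBasisOf_basis (Module.finBasisOfFinrankEq K A hA)
  obtain ⟨b, hb, hmatch⟩ := h _ ha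
  let i : Fin n := ⟨0, hn⟩
  refine hb.not_le_span_image_ne i fun y hy => hmatch i ⟨?_, hy⟩
  exact subset_inv_smul_of_span_mul_le hspan.le (ha.mem i) (ha.1.ne_zero i) hy

theorem stmt_14 {K L : Type*} [Field K] [Field L] [Algebra K L]
    (hKL : ¬ Function.Surjective (algebraMap K L))
    (n : ℕ) (hn : 0 < n) (A B : Submodule K L)
    (hA : Module.finrank K A = n) (hB : Module.finrank K B = n)
    (h : MatchedTo A B n) :
    Submodule.span K ((A : Set L) * (B : Set L)) ≠ A :=
  stmt_14_general n hn A B hA h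
end

section
/- In the extension ℚ ⊆ ℚ(2^{1/4}), every pair (A,B) of 3-dimensional ℚ-subspaces of ℚ(2^{1/4}) with 1 ∉ B is matchable. -/
/-!
Let `[L : K] = n + 1`, let `A`, `B` be hyperplanes of `L` with `1 ∉ B`, and let `a` be a basis
of `A`. Each `Vᵢ = aᵢ⁻¹A ∩ B` is a hyperplane of `B`, because `1 ∈ aᵢ⁻¹A` while `1 ∉ B`. An
element `x ∈ B` lying in every `Vᵢ` satisfies `xA ⊆ A`, so `A` is a vector space over `K(x)` and
`[K(x) : K]` divides both `n` and `n + 1`; hence `x ∈ K`, and `1 ∉ B` forces `x = 0`. Hyperplanes of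
`B` with zero intersection are the coordinate hyperplanes of a basis `b` of `B` (choose `bᵢ ≠ 0` in
`⋂_{j ≠ i} Vⱼ`), and this `b` is matched to `a`. For `ℚ(2^{1/4})` we have `n = 3`, as `X⁴ - 2` is
Eisenstein at `2`.
-/

open Pointwise

open Module Submodule

section Hyperplanes

variable {K M : Type*} [Field K] [AddCommGroup M] [Module K M] [FiniteDimensional K M]

theorem Submodule.finrank_inf_add_one_of_ne {n : ℕ} (hM : finrank K M = n + 1)
    {P Q : Submodule K M} (hP : finrank K P = n) (hQ : finrank K Q = n) (hPQ : P ≠ Q) :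
    finrank K ↥(P ⊓ Q) + 1 = n := by
  have hQP : ¬Q ≤ P := fun hle => hPQ (eq_of_le_of_finrank_eq hle (hQ.trans hP.symm)).symm
  have hlt : finrank K P < finrank K ↥(P ⊔ Q) :=
    finrank_lt_finrank_of_lt (lt_of_le_of_ne le_sup_left fun h => hQP (h ▸ le_sup_right))
  have hle : finrank K ↥(P ⊔ Q) ≤ n + 1 := hM ▸ finrank_le _
  have := finrank_sup_add_finrank_inf_eq P Q
  omega

theorem Submodule.finrank_le_finrank_inf_biInf_add_card {ι : Type*} {B : Submodule K M}
    {V : ι → Submodule K M} (hVB : ∀ i, V i ≤ B) (hV : ∀ i, finrank K (V i) + 1 = finrank K B)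
    (s : Finset ι) : finrank K B ≤ finrank K ↥(B ⊓ ⨅ i ∈ s, V i) + s.card := by
  classical
  induction s using Finset.induction_on with
  | empty =>
    have hB : B ⊓ ⨅ i ∈ (∅ : Finset ι), V i = B := by simp
    rw [hB, Finset.card_empty, add_zero]
  | insert i s hi ih =>
    set W := B ⊓ ⨅ j ∈ s, V j
    have hWi : B ⊓ ⨅ j ∈ insert i s, V j = W ⊓ V i := by
      rw [Finset.iInf_insert, inf_left_comm, inf_comm]
    have hsup : finrank K ↥(W ⊔ V i) ≤ finrank K B :=
      finrank_mono (sup_le inf_le_left (hVB i))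
    have := finrank_sup_add_finrank_inf_eq W (V i)
    have := hV i
    rw [hWi, Finset.card_insert_of_notMem hi]
    omega

omit [FiniteDimensional K M] in
theorem linearIndependent_of_inf_iInf_eq_bot {ι : Type*} [Fintype ι] {b : ι → M}
    {B : Submodule K M} {V : ι → Submodule K M} (hb : ∀ i, b i ≠ 0) (hbB : ∀ i, b i ∈ B)
    (hbV : ∀ i j, j ≠ i → b j ∈ V i) (hV : B ⊓ ⨅ i, V i = ⊥) : LinearIndependent K b := by
  classical
  rw [Fintype.linearIndependent_iff]
  intro g hg i
  have hgi : ∀ j, g i • b i ∈ V j := by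
    intro j
    rcases eq_or_ne i j with rfl | hij
    · rw [← Finset.add_sum_erase _ _ (Finset.mem_univ i), add_eq_zero_iff_eq_neg] at hg
      rw [hg, neg_mem_iff]
      exact sum_mem fun k hk => smul_mem _ _ (hbV i k (Finset.ne_of_mem_erase hk))
    · exact smul_mem _ _ (hbV j i hij)
  have : g i • b i ∈ B ⊓ ⨅ j, V j := mem_inf.2 ⟨smul_mem _ _ (hbB i), mem_iInf _ |>.2 hgi⟩
  rw [hV, mem_bot, smul_eq_zero] at this
  exact this.resolve_right (hb i)

theorem Submodule.exists_linearIndependent_of_inf_iInf_eq_bot {ι : Type*} [Fintype ι]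
    {B : Submodule K M} {V : ι → Submodule K M} (hB : finrank K B = Fintype.card ι)
    (hVB : ∀ i, V i ≤ B) (hV : ∀ i, finrank K (V i) + 1 = Fintype.card ι)
    (hbot : B ⊓ ⨅ i, V i = ⊥) :
    ∃ b : ι → M, LinearIndependent K b ∧ span K (Set.range b) = B ∧
      ∀ i, span K (b '' {j | j ≠ i}) = V i := by
  classical
  have hne : ∀ i, B ⊓ ⨅ j ∈ Finset.univ.erase i, V j ≠ ⊥ := by
    intro i
    have := finrank_le_finrank_inf_biInf_add_card hVB (fun j => (hV j).trans hB.symm)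
      (Finset.univ.erase i)
    rw [Finset.card_erase_of_mem (Finset.mem_univ i), Finset.card_univ, hB] at this
    have := hV i
    exact one_le_finrank_iff.1 (by omega)
  choose b hbmem hb0 using fun i => exists_mem_ne_zero_of_ne_bot (hne i)
  have hbV : ∀ i j, j ≠ i → b j ∈ V i := fun i j hji => by
    simpa [hji.symm] using (mem_iInf _ |>.1 (mem_inf.1 (hbmem j)).2) i
  have hbB : ∀ i, b i ∈ B := fun i => (mem_inf.1 (hbmem i)).1
  have hli := linearIndependent_of_inf_iInf_eq_bot hb0 hbB hbV hbot
  refine ⟨b, hli, ?_, fun i => ?_⟩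
  · refine eq_of_le_of_finrank_eq (span_le.2 ?_) ?_
    · rintro _ ⟨i, rfl⟩
      exact hbB i
    · rw [finrank_span_eq_card hli, hB]
  · refine eq_of_le_of_finrank_eq (span_le.2 ?_) ?_
    · rintro _ ⟨j, hj, rfl⟩
      exact hbV i j hj
    · rw [Set.image_eq_range]
      refine (finrank_span_eq_card (hli.comp _ Subtype.val_injective)).trans ?_
      have := hV i
      simp only [ne_eq, Set.mem_ofPred_eq, Fintype.card_subtype_compl, Fintype.card_unique]
      omega

end Hyperplanes

open IntermediateField

section Extension

variable {K L : Type*} [Field K] [Field L] [Algebra K L]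

def Submodule.mulStabilizer_s19 (A : Submodule K L) : Subalgebra K L where
  carrier := {c | ∀ y ∈ A, c * y ∈ A}
  mul_mem' {c d} hc hd y hy := mul_assoc c d y ▸ hc _ (hd y hy)
  add_mem' {c d} hc hd y hy := add_mul c d y ▸ A.add_mem (hc y hy) (hd y hy)
  algebraMap_mem' r y hy := Algebra.smul_def r y ▸ A.smul_mem r hy

theorem Submodule.mem_mulStabilizer_of_span_eq {ι : Type*} {a : ι → L} {A : Submodule K L}
    (hA : span K (Set.range a) = A) {x : L} (hx : ∀ i, x * a i ∈ A) : x ∈ A.mulStabilizer_s19 := by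
  have hmap : A.map (LinearMap.mulLeft K x) ≤ A := by
    rw [← hA, map_span, span_le]
    rintro _ ⟨_, ⟨i, rfl⟩, rfl⟩
    exact hA ▸ hx i
  exact fun y hy => hmap ⟨y, hy, rfl⟩

theorem finrank_adjoin_simple_dvd_finrank_of_mem_mulStabilizer [FiniteDimensional K L]
    {A : Submodule K L} {x : L} (hx : x ∈ A.mulStabilizer_s19) : finrank K K⟮x⟯ ∣ finrank K A := by
  have hle : K⟮x⟯.toSubalgebra ≤ A.mulStabilizer_s19 := by
    rw [adjoin_simple_toSubalgebra_of_isAlgebraic (IsAlgebraic.of_finite K x)]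
    exact Algebra.adjoin_le (Set.singleton_subset_iff.2 hx)
  let A' : Submodule K⟮x⟯ L :=
    { A with smul_mem' := fun c y hy => hle c.2 y hy }
  refine ⟨finrank K⟮x⟯ A', ?_⟩
  rw [finrank_mul_finrank K K⟮x⟯ A']
  exact ((restrictScalarsEquiv K K⟮x⟯ L A').restrictScalars K).finrank_eq.symm

theorem mem_bot_of_mem_mulStabilizer [FiniteDimensional K L] {A : Submodule K L}
    (hA : (finrank K A).Coprime (finrank K L)) {x : L} (hx : x ∈ A.mulStabilizer_s19) :
    x ∈ (⊥ : IntermediateField K L) := by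
  have hL : finrank K K⟮x⟯ ∣ finrank K L := ⟨_, (finrank_mul_finrank K K⟮x⟯ L).symm⟩
  rw [← adjoin_simple_eq_bot_iff, ← IntermediateField.finrank_eq_one_iff]
  exact Nat.eq_one_of_dvd_coprimes hA
    (finrank_adjoin_simple_dvd_finrank_of_mem_mulStabilizer hx) hL

theorem Submodule.mem_inv_pointwise_smul_iff_mul_mem {a : L} (ha : a ≠ 0) {A : Submodule K L}
    {x : L} : x ∈ a⁻¹ • A ↔ a * x ∈ A :=
  AddSubmonoid.mem_inv_pointwise_smul_iff₀ ha A.toAddSubmonoid x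

theorem Submodule.finrank_pointwise_smul_of_ne_zero {a : L} (ha : a ≠ 0) (A : Submodule K L) :
    finrank K ↥(a • A) = finrank K A :=
  (A.equivMapOfInjective _ (smul_right_injective L ha)).finrank_eq.symm

theorem finrank_inv_pointwise_smul_inf_add_one [FiniteDimensional K L] {n : ℕ}
    (hL : finrank K L = n + 1) {A B : Submodule K L} (hA : finrank K A = n)
    (hB : finrank K B = n) (h1 : (1 : L) ∉ B) {a : L} (haA : a ∈ A) (ha : a ≠ 0) :
    finrank K ↥(a⁻¹ • A ⊓ B) + 1 = n := by
  have h1A : (1 : L) ∈ a⁻¹ • A :=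
    (mem_inv_pointwise_smul_iff_mul_mem ha).2 ((mul_one a).symm ▸ haA)
  have hA' : finrank K ↥(a⁻¹ • A) = n :=
    (finrank_pointwise_smul_of_ne_zero (inv_ne_zero ha) A).trans hA
  exact finrank_inf_add_one_of_ne hL hA' hB fun h => h1 (h ▸ h1A)

theorem inf_iInf_inv_pointwise_smul_eq_bot [FiniteDimensional K L] {ι : Type*}
    {A B : Submodule K L} (hA : (finrank K A).Coprime (finrank K L)) (h1 : (1 : L) ∉ B)
    {a : ι → L} (ha : ∀ i, a i ≠ 0) (hspan : span K (Set.range a) = A) :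
    B ⊓ ⨅ i, (a i)⁻¹ • A = ⊥ := by
  refine eq_bot_iff.2 fun x hx => ?_
  obtain ⟨hxB, hxA⟩ := mem_inf.1 hx
  have hstab : x ∈ A.mulStabilizer_s19 := mem_mulStabilizer_of_span_eq hspan fun i => by
    rw [mul_comm, ← mem_inv_pointwise_smul_iff_mul_mem (ha i)]
    exact mem_iInf _ |>.1 hxA i
  obtain ⟨q, rfl⟩ := IntermediateField.mem_bot.1 (mem_bot_of_mem_mulStabilizer hA hstab)
  rcases eq_or_ne q 0 with rfl | hq
  · simp
  · refine absurd ?_ h1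
    simpa [hq, Algebra.smul_def] using B.smul_mem q⁻¹ hxB

end Extension

theorem matchedTo_of_finrank_eq_succ {K L : Type*} [Field K] [Field L] [Algebra K L] {n : ℕ}
    (hL : finrank K L = n + 1) {A B : Submodule K L} (hA : finrank K A = n)
    (hB : finrank K B = n) (h1 : (1 : L) ∉ B) : MatchedTo A B n := by
  have : FiniteDimensional K L := Module.finite_of_finrank_eq_succ hL
  rintro a ⟨ha, hspan⟩
  have haA : ∀ i, a i ∈ A := fun i => hspan ▸ subset_span (Set.mem_range_self i)
  have hcop : (finrank K A).Coprime (finrank K L) := by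
    rw [hA, hL]
    exact Nat.coprime_self_add_right.2 (Nat.coprime_one_right n)
  obtain ⟨b, hb, hbB, hbV⟩ :=
    exists_linearIndependent_of_inf_iInf_eq_bot (V := fun i => (a i)⁻¹ • A ⊓ B)
      (hB.trans (Fintype.card_fin n).symm) (fun i => inf_le_right)
      (fun i => (finrank_inv_pointwise_smul_inf_add_one hL hA hB h1 (haA i) (ha.ne_zero i)).trans
        (Fintype.card_fin n).symm)
      (eq_bot_iff.2 ((inf_le_inf_left B (iInf_mono fun i => inf_le_left)).trans
        (inf_iInf_inv_pointwise_smul_eq_bot hcop h1 ha.ne_zero hspan).le))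
  refine ⟨b, ⟨hb, hbB⟩, fun i => ?_⟩
  rw [hbV i, Submodule.coe_inf, coe_pointwise_smul]

open Polynomial in
theorem irreducible_X_pow_four_sub_two : Irreducible (X ^ 4 - 2 : ℚ[X]) := by
  have hmonic : (X ^ 4 - 2 : ℤ[X]).Monic := by monicity!
  have hdeg : (X ^ 4 - 2 : ℤ[X]).natDegree = 4 := by compute_degree!
  have hprime : (Ideal.span {(2 : ℤ)}).IsPrime :=
    (Ideal.span_singleton_prime two_ne_zero).2 Int.prime_two
  have hEis : (X ^ 4 - 2 : ℤ[X]).IsEisensteinAt (Ideal.span {2}) := by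
    refine hmonic.isEisensteinAt_of_mem_of_notMem hprime.ne_top (fun {n} hn => ?_) ?_
    · rw [hdeg] at hn
      interval_cases n <;> simp
    · simp [Ideal.span_singleton_pow, Ideal.mem_span_singleton]
  simpa using (hmonic.irreducible_iff_irreducible_map_fraction_map (K := ℚ)).1
    (hEis.irreducible hprime hmonic.isPrimitive (by omega))

open Polynomial in
theorem finrank_adjoin_two_rpow_quarter :
    finrank ℚ ℚ⟮(2 : ℝ) ^ ((1 : ℝ) / 4)⟯ = 4 := by
  have hroot : aeval ((2 : ℝ) ^ ((1 : ℝ) / 4)) (X ^ 4 - 2 : ℚ[X]) = 0 := by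
    rw [map_sub, map_pow, aeval_X, map_ofNat, ← Real.rpow_natCast, ← Real.rpow_mul zero_le_two]
    norm_num
  have hmonic : (X ^ 4 - 2 : ℚ[X]).Monic := by monicity!
  rw [adjoin.finrank ⟨_, hmonic, hroot⟩,
    ← minpoly.eq_of_irreducible_of_monic irreducible_X_pow_four_sub_two hroot hmonic]
  compute_degree!

theorem stmt_19
    (A B : Submodule ℚ (IntermediateField.adjoin ℚ ({(2 : ℝ) ^ ((1 : ℝ) / 4)} : Set ℝ)))
    (hA : Module.finrank ℚ A = 3) (hB : Module.finrank ℚ B = 3)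
    (h1 : (1 : IntermediateField.adjoin ℚ ({(2 : ℝ) ^ ((1 : ℝ) / 4)} : Set ℝ)) ∉ B) :
    MatchedTo A B 3 :=
  matchedTo_of_finrank_eq_succ finrank_adjoin_two_rpow_quarter hA hB h1
end
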